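/- arXiv:1408.2180 — 16 statements merged into one kernel-verified Lean document; each statement's English description precedes it below -/
import Mathlib

section
/- Let p be a parameter array over F of diameter d with fundamental parameter β, and suppose β ≠ 2 and β ≠ -2 (type I). Let q be a nonzero element of F with β = q + q^{-1}. Then q^i ≠ 1 for 1 ≤ i ≤ d, and Ω(p) = (q - 1)(q^{d-1} + 1)/(q^d - 1). -/
open Finset

/-- A parameter array over `F` of diameter `d`, with fundamental parameter `β`.
The data is `θ θs : ℕ → F` (eigenvalue sequences, indices `0,…,d`) and
`φ ϕ : ℕ → F` (split sequences, indices `1,…,d`). -/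
def IsParameterArray {F : Type*} [Field F] (d : ℕ)
    (θ θs φ ϕ : ℕ → F) (β : F) : Prop :=
  (∀ i j, i < j → j ≤ d → θ i ≠ θ j) ∧
  (∀ i j, i < j → j ≤ d → θs i ≠ θs j) ∧
  (∀ i, 1 ≤ i → i ≤ d → φ i ≠ 0) ∧
  (∀ i, 1 ≤ i → i ≤ d → ϕ i ≠ 0) ∧
  (∀ i, 1 ≤ i → i ≤ d →
    φ i = ϕ 1 * ∑ l ∈ Finset.range i, (θ l - θ (d - l)) / (θ 0 - θ d)
        + (θs i - θs 0) * (θ (i - 1) - θ d)) ∧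
  (∀ i, 1 ≤ i → i ≤ d →
    ϕ i = φ 1 * ∑ l ∈ Finset.range i, (θ l - θ (d - l)) / (θ 0 - θ d)
        + (θs i - θs 0) * (θ (d - i + 1) - θ 0)) ∧
  (∀ i, 2 ≤ i → i ≤ d - 1 →
    (θ (i - 2) - θ (i + 1)) / (θ (i - 1) - θ i) = β + 1 ∧
    (θs (i - 2) - θs (i + 1)) / (θs (i - 1) - θs i) = β + 1)

lemma aux_geom {F : Type*} [Field F] (q A B : F) (e : ℕ) (hq : q ≠ 0) (hq1 : q ≠ 1) :
    (A * q * ((q ^ (e+1) - 1) / (q - 1)) + B * q⁻¹ * (((q⁻¹) ^ (e+1) - 1) / (q⁻¹ - 1))) * (q - 1)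
      = (q ^ (e+1) - 1) * (A * q + B * (q⁻¹) ^ (e+1)) := by
  have hq1' : q - 1 ≠ 0 := sub_ne_zero.mpr hq1
  have hqinv1 : q⁻¹ ≠ 1 := fun h => hq1 (by rw [← inv_inv q, h, inv_one])
  have hqi1 : q⁻¹ - 1 ≠ 0 := sub_ne_zero.mpr hqinv1
  have key : q⁻¹ * (((q⁻¹) ^ (e+1) - 1) / (q⁻¹ - 1))
      = (q⁻¹) ^ (e+1) * ((q ^ (e+1) - 1) / (q - 1)) := by
    rw [mul_div_assoc', mul_div_assoc', div_eq_div_iff hqi1 hq1']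
    simp only [inv_pow, pow_succ]
    field_simp
    ring
  rw [mul_assoc B, key]
  field_simp

/-- Type I: if `β ≠ 2`, `β ≠ -2` and `β = q + q⁻¹` with `q ≠ 0`, then `q^i ≠ 1` for
`1 ≤ i ≤ d` and `Ω(p) = (q-1)(q^{d-1}+1)/(q^d-1)`. -/
theorem Omega_typeI
    {F : Type*} [Field F] [IsAlgClosed F] (d : ℕ) (hd : 3 ≤ d)
    (θ θs φ ϕ : ℕ → F) (β q : F)
    (hp : IsParameterArray d θ θs φ ϕ β)
    (hβ : β ≠ 2) (hβ' : β ≠ -2)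
    (hq : q ≠ 0) (hβq : β = q + q⁻¹) :
    (∀ i, 1 ≤ i → i ≤ d → q ^ i ≠ 1) ∧
    (ϕ 1 + ϕ d - φ 1 - φ d) / ((θ 0 - θ d) * (θs 0 - θs d))
      = (q - 1) * (q ^ (d - 1) + 1) / (q ^ d - 1) := by
  obtain ⟨hθ, hθs, hφne, hϕne, hiii, hiv, hv⟩ := hp
  have hq1 : q ≠ 1 := by
    rintro rfl; exact hβ (by rw [hβq]; norm_num)
  have hqm1 : q ≠ -1 := by
    rintro rfl; exact hβ' (by rw [hβq]; norm_num)
  have hqinv1 : q⁻¹ ≠ 1 := fun h => hq1 (by rw [← inv_inv q, h, inv_one])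
  have hq2 : q ^ 2 - 1 ≠ 0 := by
    intro h
    have h2 : (q - 1) * (q + 1) = 0 := by linear_combination h
    rcases mul_eq_zero.mp h2 with h | h
    · exact hq1 (by linear_combination h)
    · exact hqm1 (by linear_combination h)
  set D : ℕ → F := fun k => θ k - θ (k + 1) with hD
  have hrec : ∀ k, k + 3 ≤ d → D (k + 2) = β * D (k + 1) - D k := by
    intro k hk
    have h1 : θ (k + 1) - θ (k + 2) ≠ 0 :=
      sub_ne_zero.mpr (hθ (k + 1) (k + 2) (by omega) (by omega))
    have h2 := (hv (k + 2) (by omega) (by omega)).1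
    have e1 : k + 2 - 2 = k := by omega
    have e2 : k + 2 - 1 = k + 1 := by omega
    rw [e1, e2, div_eq_iff h1] at h2
    simp only [hD]
    linear_combination h2
  obtain ⟨A, B, hD0, hD1⟩ :
      ∃ A B : F, D 0 = A * q + B * q⁻¹ ∧ D 1 = A * q ^ 2 + B * (q⁻¹) ^ 2 := by
    refine ⟨(D 1 - q⁻¹ * D 0) / (q ^ 2 - 1),
      q * (D 0 - (D 1 - q⁻¹ * D 0) / (q ^ 2 - 1) * q), ?_, ?_⟩ <;>
      field_simp <;> ring
  have hDform : ∀ k, k + 1 ≤ d → D k = A * q ^ (k + 1) + B * (q⁻¹) ^ (k + 1) := by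
    intro k
    induction k using Nat.strong_induction_on with
    | _ k ih =>
      match k with
      | 0 => intro _; simpa using hD0
      | 1 => intro _; simpa using hD1
      | (k + 2) =>
        intro hk
        rw [hrec k (by omega), ih (k + 1) (by omega) (by omega),
          ih k (by omega) (by omega), hβq]
        simp only [inv_pow]
        field_simp
        ring
  have htel : ∀ n, n ≤ d → θ 0 - θ n = ∑ k ∈ Finset.range n, D k := by
    intro n
    induction n with
    | zero => intro _; simp
    | succ n ih =>
      intro h
      rw [Finset.sum_range_succ, ← ih (by omega)]
      simp only [hD]
      ring
  have hgeom : ∀ n, n ≤ d → θ 0 - θ n =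
      A * q * ((q ^ n - 1) / (q - 1)) + B * q⁻¹ * (((q⁻¹) ^ n - 1) / (q⁻¹ - 1)) := by
    intro n hn
    rw [htel n hn,
      Finset.sum_congr rfl (fun k hk => hDform k (by
        have := Finset.mem_range.mp hk; omega)),
      Finset.sum_add_distrib, ← geom_sum_eq hq1, ← geom_sum_eq hqinv1,
      Finset.mul_sum, Finset.mul_sum]
    congr 1 <;>
      (apply Finset.sum_congr rfl; intro k _; rw [pow_succ]; ring)
  have hqpow : ∀ n, 1 ≤ n → n ≤ d → q ^ n ≠ 1 := by
    intro n h1 hn hcon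
    have h0 : θ 0 ≠ θ n := hθ 0 n (by omega) hn
    have hinv : (q⁻¹) ^ n = 1 := by rw [inv_pow, hcon, inv_one]
    have hz : θ 0 - θ n = 0 := by rw [hgeom n hn, hcon, hinv]; simp
    exact h0 (sub_eq_zero.mp hz)
  refine ⟨hqpow, ?_⟩
  obtain ⟨e, rfl⟩ : ∃ e, d = e + 1 := ⟨d - 1, by omega⟩
  have hθ0d : θ 0 - θ (e + 1) ≠ 0 := sub_ne_zero.mpr (hθ 0 (e + 1) (by omega) le_rfl)
  have hθs0d : θs 0 - θs (e + 1) ≠ 0 := sub_ne_zero.mpr (hθs 0 (e + 1) (by omega) le_rfl)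
  have hsum1 : ∑ l ∈ Finset.range 1, (θ l - θ (e + 1 - l)) / (θ 0 - θ (e + 1)) = 1 := by
    simp [div_self hθ0d]
  have hsumd : ∑ l ∈ Finset.range (e + 1), (θ l - θ (e + 1 - l)) / (θ 0 - θ (e + 1)) = 1 := by
    rw [← Finset.sum_div, div_eq_one_iff_eq hθ0d, Finset.sum_sub_distrib]
    have h1 : ∑ l ∈ Finset.range (e + 1), θ (e + 1 - l)
        = ∑ l ∈ Finset.range (e + 1), θ (l + 1) := by
      rw [← Finset.sum_range_reflect (fun l => θ (l + 1)) (e + 1)]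
      apply Finset.sum_congr rfl
      intro l hl
      have := Finset.mem_range.mp hl
      congr 1
      omega
    rw [h1, Finset.sum_range_succ (fun l => θ (l + 1)) e,
      Finset.sum_range_succ' θ e]
    ring
  have E1 := hiii 1 le_rfl (by omega)
  rw [hsum1, mul_one] at E1
  norm_num at E1
  have E2 := hiii (e + 1) (by omega) le_rfl
  rw [hsumd, mul_one] at E2
  simp only [Nat.add_sub_cancel] at E2
  have E3 := hiv 1 le_rfl (by omega)
  rw [hsum1, mul_one] at E3
  simp only [Nat.add_sub_cancel] at E3
  have E4 := hiv (e + 1) (by omega) le_rfl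
  rw [hsumd, mul_one] at E4
  have edd : e + 1 - (e + 1) + 1 = 1 := by omega
  rw [edd] at E4
  have hnum : ϕ 1 + ϕ (e + 1) - φ 1 - φ (e + 1)
      = (θs 0 - θs (e + 1)) * ((θ 0 - θ 1) + (θ e - θ (e + 1))) := by
    linear_combination E4 - E2
  have h1 : θ 0 - θ 1 = A * q + B * q⁻¹ := by
    have := hDform 0 (by omega)
    simpa [hD] using this
  have h2 : θ e - θ (e + 1) = A * q ^ (e + 1) + B * (q⁻¹) ^ (e + 1) := by
    have := hDform e (by omega)
    simpa [hD] using this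
  have hT := hgeom (e + 1) le_rfl
  have hqd : q ^ (e + 1) - 1 ≠ 0 := sub_ne_zero.mpr (hqpow (e + 1) (by omega) le_rfl)
  have hq1' : q - 1 ≠ 0 := sub_ne_zero.mpr hq1
  have hqi1 : q⁻¹ - 1 ≠ 0 := sub_ne_zero.mpr hqinv1
  have hqe : q ^ e ≠ 0 := pow_ne_zero e hq
  have hT2 : (θ 0 - θ (e + 1)) * (q - 1)
      = (q ^ (e + 1) - 1) * (A * q + B * (q⁻¹) ^ (e + 1)) := by
    rw [hT]; exact aux_geom q A B e hq hq1
  have hC : B * (q⁻¹) ^ (e + 1) * q ^ e = B * q⁻¹ := by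
    simp only [pow_succ, inv_pow]
    field_simp
  rw [hnum, Nat.add_sub_cancel, div_eq_div_iff (mul_ne_zero hθ0d hθs0d) hqd]
  linear_combination (θs 0 - θs (e + 1)) * (q ^ (e + 1) - 1) * (h1 - hC + h2)
    - (q ^ e + 1) * (θs 0 - θs (e + 1)) * hT2
end

section
/- Let p be a parameter array over F of diameter d with fundamental parameter β, and suppose β = 2 and Char(F) ≠ 2 (type II). Then d·1_F ≠ 0 in F, and Ω(p) = 2/d. -/
open Finset

/-- Type II: if `β = 2` and `Char(F) ≠ 2`, then `d·1_F ≠ 0` and `Ω(p) = 2/d`. -/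
theorem Omega_typeII
    {F : Type*} [Field F] [IsAlgClosed F] (d : ℕ) (hd : 3 ≤ d)
    (θ θs φ ϕ : ℕ → F) (β : F)
    (hp : IsParameterArray d θ θs φ ϕ β)
    (hβ : β = 2) (hchar : ringChar F ≠ 2) :
    (d : F) ≠ 0 ∧
    (ϕ 1 + ϕ d - φ 1 - φ d) / ((θ 0 - θ d) * (θs 0 - θs d)) = 2 / (d : F) := by
  obtain ⟨hθ, hθs, hφ, hϕ, hiii, hiv, hv⟩ := hp
  have h2F : (2:F) ≠ 0 := Ring.two_ne_zero hchar
  have hθ0d : θ 0 ≠ θ d := hθ 0 d (by omega) le_rfl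
  have hθs0d : θs 0 ≠ θs d := hθs 0 d (by omega) le_rfl
  -- the full sum equals 1
  have hsum : ∑ l ∈ Finset.range d, (θ l - θ (d - l)) / (θ 0 - θ d) = 1 := by
    rw [← Finset.sum_div]
    have h1 : ∑ l ∈ Finset.range d, (θ l - θ (d - l)) = θ 0 - θ d := by
      have hr : ∑ l ∈ Finset.range d, θ (d - l) = ∑ l ∈ Finset.range d, θ (l + 1) := by
        rw [← Finset.sum_range_reflect (fun j => θ (j + 1)) d]
        apply Finset.sum_congr rfl
        intro l hl
        simp only [Finset.mem_range] at hl
        congr 1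
        omega
      rw [Finset.sum_sub_distrib, hr, ← Finset.sum_sub_distrib]
      exact Finset.sum_range_sub' θ d
    rw [h1, div_self (sub_ne_zero.mpr hθ0d)]
  -- the recurrence from condition (v)
  have hrec : ∀ n, n + 3 ≤ d →
      θ (n + 3) - θ (n + 2) = 2 * (θ (n + 2) - θ (n + 1)) - (θ (n + 1) - θ n) := by
    intro n hn
    have h := (hv (n + 2) (by omega) (by omega)).1
    rw [show n + 2 - 2 = n by omega, show n + 2 - 1 = n + 1 by omega, hβ] at h
    have hne : θ (n + 1) - θ (n + 2) ≠ 0 :=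
      sub_ne_zero.mpr (hθ (n + 1) (n + 2) (by omega) (by omega))
    have h' := (div_eq_iff hne).mp h
    linear_combination -h'
  set c : F := (θ 2 - θ 1) - (θ 1 - θ 0) with hc
  -- the differences are arithmetic
  have hΔ : ∀ i, i + 1 ≤ d → θ (i + 1) - θ i = (θ 1 - θ 0) + (i : F) * c := by
    intro i
    induction i using Nat.strong_induction_on with
    | _ i ih =>
      match i with
      | 0 => intro _; simp
      | 1 => intro _; rw [hc]; push_cast; ring
      | (n + 2) =>
        intro hi
        have h1 := ih (n + 1) (by omega) (by omega)
        have h0 := ih n (by omega) (by omega)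
        have hr := hrec n (by omega)
        push_cast at h1 h0 ⊢
        linear_combination hr + 2 * h1 - h0
  have hΔd : θ d - θ (d - 1) = (θ 1 - θ 0) + ((d : F) - 1) * c := by
    have h := hΔ (d - 1) (by omega)
    rw [show d - 1 + 1 = d by omega] at h
    rw [h, Nat.cast_sub (by omega : 1 ≤ d)]
    norm_num
  -- Gauss sum
  have hg : (∑ i ∈ Finset.range d, (i : F)) * 2 = (d : F) * ((d : F) - 1) := by
    have h := congrArg (fun n : ℕ => (n : F)) (Finset.sum_range_id_mul_two d)
    push_cast [Nat.cast_sub (by omega : 1 ≤ d)] at h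
    linear_combination h
  have hsum2 : θ d - θ 0 = (d : F) * (θ 1 - θ 0) + (∑ i ∈ Finset.range d, (i : F)) * c := by
    rw [← Finset.sum_range_sub θ d]
    rw [Finset.sum_congr rfl (fun i hi => hΔ i (by
      simp only [Finset.mem_range] at hi; omega))]
    rw [Finset.sum_add_distrib, Finset.sum_const, ← Finset.sum_mul]
    simp [nsmul_eq_mul]
  set S : F := (θ 1 - θ 0) + (θ d - θ (d - 1)) with hS
  have hkey : 2 * (θ d - θ 0) = (d : F) * S := by
    rw [hS]
    linear_combination 2 * hsum2 + c * hg - (d : F) * hΔd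
  have hprod : (d : F) * S ≠ 0 := by
    rw [← hkey]
    exact mul_ne_zero h2F (sub_ne_zero.mpr (Ne.symm hθ0d))
  have hd0 : (d : F) ≠ 0 := fun h => hprod (by rw [h, zero_mul])
  refine ⟨hd0, ?_⟩
  -- expressions for φ d and ϕ d
  have e2 : φ d = ϕ 1 + (θs d - θs 0) * (θ (d - 1) - θ d) := by
    have h := hiii d (by omega) le_rfl
    rw [hsum, mul_one] at h
    exact h
  have e4 : ϕ d = φ 1 + (θs d - θs 0) * (θ 1 - θ 0) := by
    have h := hiv d (by omega) le_rfl
    rw [hsum, mul_one, show d - d + 1 = 1 by omega] at h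
    exact h
  have hN : ϕ 1 + ϕ d - φ 1 - φ d = (θs d - θs 0) * S := by
    rw [e2, e4, hS]; ring
  rw [hN, div_eq_div_iff (mul_ne_zero (sub_ne_zero.mpr hθ0d) (sub_ne_zero.mpr hθs0d)) hd0]
  linear_combination (θs 0 - θs d) * hkey
end

section
/- Let p be a parameter array over F of diameter d with fundamental parameter β, and suppose β = -2, Char(F) ≠ 2, and d is even (type III+). Then d·1_F ≠ 0 in F, and Ω(p) = 2(d-1)/d. -/
open Finset

/-- Type III⁺: if `β = -2`, `Char(F) ≠ 2` and `d` is even, then `d·1_F ≠ 0` and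
`Ω(p) = 2(d-1)/d`. -/
theorem Omega_typeIIIplus
    {F : Type*} [Field F] [IsAlgClosed F] (d : ℕ) (hd : 3 ≤ d)
    (θ θs φ ϕ : ℕ → F) (β : F)
    (hp : IsParameterArray d θ θs φ ϕ β)
    (hβ : β = -2) (hchar : ringChar F ≠ 2) (hdeven : Even d) :
    (d : F) ≠ 0 ∧
    (ϕ 1 + ϕ d - φ 1 - φ d) / ((θ 0 - θ d) * (θs 0 - θs d))
      = 2 * ((d - 1 : ℕ) : F) / (d : F) := by
  obtain ⟨hθ, hθs, hφ, hϕ, heq1, heq2, hrec⟩ := hp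
  obtain ⟨m, hm⟩ := hdeven
  have hm2 : 2 ≤ m := by omega
  set c : F := θ 2 - θ 0 with hc
  have hc2 : θ 2 = θ 0 + c := by rw [hc]; ring
  -- two-step recurrence: θ (i+2) + θ (i+3) = θ i + θ (i+1)
  have ht : ∀ i, i + 3 ≤ d → θ (i + 2) + θ (i + 3) = θ i + θ (i + 1) := by
    intro i hi
    have h := (hrec (i + 2) (by omega) (by omega)).1
    rw [hβ] at h
    have hi2 : i + 2 - 2 = i := by omega
    have hi1 : i + 2 - 1 = i + 1 := by omega
    rw [hi2, hi1] at h
    have hne : θ (i + 1) - θ (i + 2) ≠ 0 :=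
      sub_ne_zero.mpr (hθ (i + 1) (i + 2) (by omega) (by omega))
    have h' : θ i - θ (i + 3) = (-2 + 1) * (θ (i + 1) - θ (i + 2)) :=
      (div_eq_iff hne).mp h
    linear_combination -h'
  -- parity constancy of θ i + θ (i+1)
  have hte : ∀ k, 2 * k + 1 ≤ d → θ (2 * k) + θ (2 * k + 1) = θ 0 + θ 1 := by
    intro k
    induction k with
    | zero => intro _; norm_num
    | succ k ih =>
      intro hk
      show θ (2 * k + 2) + θ (2 * k + 3) = θ 0 + θ 1
      rw [ht (2 * k) (by omega)]
      exact ih (by omega)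
  have hto : ∀ k, 2 * k + 2 ≤ d → θ (2 * k + 1) + θ (2 * k + 2) = θ 1 + θ 2 := by
    intro k
    induction k with
    | zero => intro _; norm_num
    | succ k ih =>
      intro hk
      show θ (2 * k + 3) + θ (2 * k + 4) = θ 1 + θ 2
      have e : θ (2 * k + 1 + 2) + θ (2 * k + 1 + 3) = θ (2 * k + 1) + θ (2 * k + 1 + 1) :=
        ht (2 * k + 1) (by omega)
      have e' : θ (2 * k + 3) + θ (2 * k + 4) = θ (2 * k + 1) + θ (2 * k + 2) := e
      rw [e']
      exact ih (by omega)
  -- closed form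
  have hcf : ∀ k, 2 * k + 1 ≤ d →
      θ (2 * k) = θ 0 + (k : F) * c ∧ θ (2 * k + 1) = θ 1 - (k : F) * c := by
    intro k
    induction k with
    | zero => intro _; norm_num
    | succ k ih =>
      intro hk
      obtain ⟨h1, h2⟩ := ih (by omega)
      have e1 := hto k (by omega)
      have e2 : θ (2 * k + 2) + θ (2 * k + 3) = θ 0 + θ 1 := hte (k + 1) (by omega)
      have hA : θ (2 * k + 2) = θ 0 + ((k : F) + 1) * c := by
        linear_combination e1 - h2 + hc2
      constructor
      · show θ (2 * k + 2) = θ 0 + ((k + 1 : ℕ) : F) * c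
        push_cast
        linear_combination hA
      · show θ (2 * k + 3) = θ 1 - ((k + 1 : ℕ) : F) * c
        push_cast
        linear_combination e2 - hA
  -- values at d-1 and d
  obtain ⟨hA, hB⟩ := hcf (m - 1) (by omega)
  have hi1 : 2 * (m - 1) + 1 = d - 1 := by omega
  have hθd1 : θ (d - 1) = θ 1 - ((m : F) - 1) * c := by
    rw [hi1] at hB
    rw [hB, Nat.cast_sub (by omega : 1 ≤ m), Nat.cast_one]
  have hθd : θ d = θ 0 + (m : F) * c := by
    have e := hto (m - 1) (by omega)
    have h2 : 2 * (m - 1) + 2 = d := by omega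
    rw [hi1, h2] at e
    linear_combination e - hθd1 + hc2
  -- nonvanishing
  have h0d : θ 0 - θ d ≠ 0 := sub_ne_zero.mpr (hθ 0 d (by omega) le_rfl)
  have h0d' : θ 0 - θ d = -((m : F) * c) := by rw [hθd]; ring
  have hmc : (m : F) * c ≠ 0 := by
    intro h; apply h0d; rw [h0d', h, neg_zero]
  have hmF : (m : F) ≠ 0 := fun h => hmc (by rw [h, zero_mul])
  have hcne : c ≠ 0 := fun h => hmc (by rw [h, mul_zero])
  have h2ne : (2 : F) ≠ 0 := by
    intro h
    apply hchar
    exact CharP.ringChar_of_prime_eq_zero Nat.prime_two (by exact_mod_cast h)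
  have hdF : (d : F) = 2 * (m : F) := by
    rw [hm]; push_cast; ring
  have hdne : (d : F) ≠ 0 := by
    rw [hdF]; exact mul_ne_zero h2ne hmF
  refine ⟨hdne, ?_⟩
  -- the normalized sum equals 1
  have hsum : ∑ l ∈ Finset.range d, (θ l - θ (d - l)) / (θ 0 - θ d) = 1 := by
    rw [← Finset.sum_div]
    have hrefl : ∑ l ∈ Finset.range d, θ (d - l) = ∑ l ∈ Finset.range d, θ (l + 1) := by
      rw [← Finset.sum_range_reflect (fun l => θ (l + 1)) d]
      apply Finset.sum_congr rfl
      intro l hl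
      simp only [Finset.mem_range] at hl
      congr 1
      omega
    have htel : ∑ l ∈ Finset.range d, (θ (l + 1) - θ l) = θ d - θ 0 :=
      Finset.sum_range_sub θ d
    have hs : ∑ l ∈ Finset.range d, (θ l - θ (d - l)) = θ 0 - θ d := by
      rw [Finset.sum_sub_distrib, hrefl]
      have h5 : ∑ l ∈ Finset.range d, θ (l + 1)
          = ∑ l ∈ Finset.range d, θ l + (θ d - θ 0) := by
        rw [← htel, ← Finset.sum_add_distrib]
        apply Finset.sum_congr rfl
        intro l _; ring
      rw [h5]; ring
    rw [hs, div_self h0d]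
  -- the two needed split equations
  have e2 := heq1 d (by omega) le_rfl
  rw [hsum, mul_one] at e2
  have e4 := heq2 d (by omega) le_rfl
  rw [hsum, mul_one] at e4
  have hdd : d - d + 1 = 1 := by omega
  rw [hdd] at e4
  -- numerator
  have hBne : θs 0 - θs d ≠ 0 := sub_ne_zero.mpr (hθs 0 d (by omega) le_rfl)
  have key : ϕ 1 + ϕ d - φ 1 - φ d
      = (θs d - θs 0) * ((2 * (m : F) - 1) * c) := by
    rw [e2, e4, hθd, hθd1]
    ring
  have hd1 : ((d - 1 : ℕ) : F) = 2 * (m : F) - 1 := by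
    rw [Nat.cast_sub (by omega : 1 ≤ d), Nat.cast_one, hdF]
  rw [key, h0d', hd1, hdF]
  field_simp
  ring
end

section
/- Let p be a parameter array over F of diameter d with fundamental parameter β, and suppose β = -2, Char(F) ≠ 2, and d is odd (type III−). Then Ω(p) = 2, i.e. ϕ_1 + ϕ_d - φ_1 - φ_d = 2(θ_0 - θ_d)(θ*_0 - θ*_d). -/
open Finset

/-- Type III⁻: if `β = -2`, `Char(F) ≠ 2` and `d` is odd, then `Ω(p) = 2`, i.e.
`ϕ 1 + ϕ d - φ 1 - φ d = 2 (θ 0 - θ d)(θs 0 - θs d)`. -/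
theorem Omega_typeIIIminus
    {F : Type*} [Field F] [IsAlgClosed F] (d : ℕ) (hd : 3 ≤ d)
    (θ θs φ ϕ : ℕ → F) (β : F)
    (hp : IsParameterArray d θ θs φ ϕ β)
    (hβ : β = -2) (hchar : ringChar F ≠ 2) (hdodd : Odd d) :
    ϕ 1 + ϕ d - φ 1 - φ d = 2 * ((θ 0 - θ d) * (θs 0 - θs d)) := by
  obtain ⟨hθ, hθs, hφ, hϕ, hiii, hiv, hv⟩ := hp
  have hθ0d : θ 0 - θ d ≠ 0 := sub_ne_zero.mpr (hθ 0 d (by omega) le_rfl)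
  -- pair sums are constant (even case)
  have hpair : ∀ k, 2*k+1 ≤ d → θ (2*k) + θ (2*k+1) = θ 0 + θ 1 := by
    intro k
    induction k with
    | zero => intro _; norm_num
    | succ k ih =>
      intro hk
      have h1 := ih (by omega)
      have h2 := (hv (2*k+2) (by omega) (by omega)).1
      have hne : θ (2*k+1) - θ (2*k+2) ≠ 0 :=
        sub_ne_zero.mpr (hθ (2*k+1) (2*k+2) (by omega) (by omega))
      have e1 : 2*k+2-2 = 2*k := by omega
      have e2 : 2*k+2-1 = 2*k+1 := by omega
      rw [hβ, e1, e2, div_eq_iff hne] at h2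
      have e3 : 2*(k+1) = 2*k+2 := by omega
      rw [e3]
      linear_combination h1 - h2
  -- the full sum equals 1
  have hS : ∑ l ∈ Finset.range d, (θ l - θ (d - l)) / (θ 0 - θ d) = 1 := by
    rw [← Finset.sum_div]
    have hrefl : ∑ l ∈ Finset.range d, θ (d - l)
        = ∑ l ∈ Finset.range d, θ (l + 1) := by
      have := Finset.sum_range_reflect (fun i => θ (i + 1)) d
      refine Eq.trans ?_ this
      apply Finset.sum_congr rfl
      intro l hl
      have hl' : l < d := Finset.mem_range.mp hl
      congr 1
      omega
    rw [Finset.sum_sub_distrib, hrefl, ← Finset.sum_sub_distrib,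
      Finset.sum_range_sub' θ d, div_self hθ0d]
  -- the singleton sum equals 1
  have hS1 : ∑ l ∈ Finset.range 1, (θ l - θ (d - l)) / (θ 0 - θ d) = 1 := by
    rw [Finset.sum_range_one]
    simp only [Nat.sub_zero]
    exact div_self hθ0d
  -- pair relation at the top
  obtain ⟨m, hm⟩ := hdodd
  have hpd : θ (d-1) + θ d = θ 0 + θ 1 := by
    have := hpair m (by omega)
    have e1 : 2*m = d - 1 := by omega
    have e2 : d - 1 + 1 = d := by omega
    rwa [e1, e2] at this
  -- instantiate the split relations
  have h1 := hiii 1 le_rfl (by omega)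
  have h2 := hiii d (by omega) le_rfl
  have h3 := hiv d (by omega) le_rfl
  rw [hS1] at h1
  rw [hS] at h2 h3
  have e5 : d - d + 1 = 1 := by omega
  rw [e5] at h3
  simp only [Nat.sub_self] at h1 h2 h3
  linear_combination h3 - h2 - (θs d - θs 0) * hpd
end

section
/- Let p be a parameter array over F of diameter d with fundamental parameter β, and suppose β = 0 and Char(F) = 2 (type IV). Then Ω(p) = 0, i.e. ϕ_1 + ϕ_d - φ_1 - φ_d = 0. -/
open Finset

/-- Type IV: if `β = 0` and `Char(F) = 2`, then `Ω(p) = 0`, i.e.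
`ϕ 1 + ϕ d - φ 1 - φ d = 0`. -/
theorem Omega_typeIV
    {F : Type*} [Field F] [IsAlgClosed F] (d : ℕ) (hd : 3 ≤ d)
    (θ θs φ ϕ : ℕ → F) (β : F)
    (hp : IsParameterArray d θ θs φ ϕ β)
    (hβ : β = 0) (hchar : ringChar F = 2) :
    ϕ 1 + ϕ d - φ 1 - φ d = 0 := by
  subst hβ
  obtain ⟨hθ, hθs, hφ, hϕ, hφeq, hϕeq, hβeq⟩ := hp
  -- First show d = 3.
  have hd3 : d = 3 := by
    by_contra h
    have h4 : 4 ≤ d := by omega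
    have h12 : θ 1 - θ 2 ≠ 0 := sub_ne_zero.mpr (hθ 1 2 (by norm_num) (by omega))
    have h23 : θ 2 - θ 3 ≠ 0 := sub_ne_zero.mpr (hθ 2 3 (by norm_num) (by omega))
    have e1 := (hβeq 2 (by norm_num) (by omega)).1
    have e2 := (hβeq 3 (by norm_num) (by omega)).1
    norm_num at e1 e2
    rw [div_eq_one_iff_eq h12] at e1
    rw [div_eq_one_iff_eq h23] at e2
    exact absurd (by linear_combination e1 + e2 : θ 0 = θ 4)
      (hθ 0 4 (by norm_num) h4)
  subst hd3
  have h03 : θ 0 - θ 3 ≠ 0 := sub_ne_zero.mpr (hθ 0 3 (by norm_num) le_rfl)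
  have h12 : θ 1 - θ 2 ≠ 0 := sub_ne_zero.mpr (hθ 1 2 (by norm_num) (by norm_num))
  have hb := (hβeq 2 (by norm_num) (by norm_num)).1
  norm_num at hb
  rw [div_eq_one_iff_eq h12] at hb
  have hφ1 := hφeq 1 le_rfl (by norm_num)
  have hφ3 := hφeq 3 (by norm_num) le_rfl
  have hϕ1 := hϕeq 1 le_rfl (by norm_num)
  have hϕ3 := hϕeq 3 (by norm_num) le_rfl
  have hS1 : ∑ l ∈ Finset.range 1, (θ l - θ (3 - l)) / (θ 0 - θ 3) = 1 := by
    rw [Finset.sum_range_one]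
    norm_num
    exact h03
  have hS3 : ∑ l ∈ Finset.range 3, (θ l - θ (3 - l)) / (θ 0 - θ 3) = 1 := by
    rw [Finset.sum_range_succ, Finset.sum_range_succ, Finset.sum_range_one]
    norm_num
    field_simp
    ring
  rw [hS1] at hφ1 hϕ1
  rw [hS3] at hφ3 hϕ3
  norm_num at hφ1 hφ3 hϕ1 hϕ3
  linear_combination hϕ3 - hφ3 - (θs 3 - θs 0) * hb
end

section
/- For every parameter array p over F of diameter d, Ω(p) ≠ 1; equivalently, ϕ_1 + ϕ_d - φ_1 - φ_d ≠ (θ_0 - θ_d)(θ*_0 - θ*_d). -/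
open Finset

/-- For every parameter array `p` over `F` of diameter `d`, `Ω(p) ≠ 1`;
equivalently `ϕ 1 + ϕ d - φ 1 - φ d ≠ (θ 0 - θ d)(θs 0 - θs d)`. -/
theorem Omega_ne_one
    {F : Type*} [Field F] [IsAlgClosed F] (d : ℕ) (hd : 3 ≤ d)
    (θ θs φ ϕ : ℕ → F) (β : F)
    (hp : IsParameterArray d θ θs φ ϕ β) :
    ϕ 1 + ϕ d - φ 1 - φ d ≠ (θ 0 - θ d) * (θs 0 - θs d) := by
  obtain ⟨hθ, hθs, hφ, hϕ, hE, hF, -⟩ := hp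
  have h0d : θ 0 - θ d ≠ 0 := sub_ne_zero.mpr (hθ 0 d (by omega) le_rfl)
  have hs0d : θs 0 - θs d ≠ 0 := sub_ne_zero.mpr (hθs 0 d (by omega) le_rfl)
  have h1d1 : θ (d - 1) - θ 1 ≠ 0 := sub_ne_zero.mpr
    ((hθ 1 (d - 1) (by omega) (by omega)).symm)
  have hd1 : d - 1 + 1 = d := by omega
  -- the sum at i = 1 equals 1
  have S1 : ∑ l ∈ Finset.range 1, (θ l - θ (d - l)) / (θ 0 - θ d) = 1 := by
    simp [div_self h0d]
  -- the sum at i = d equals 1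
  have Sd : ∑ l ∈ Finset.range d, (θ l - θ (d - l)) / (θ 0 - θ d) = 1 := by
    rw [← Finset.sum_div]
    have hnum : ∑ l ∈ Finset.range d, (θ l - θ (d - l)) = θ 0 - θ d := by
      have hrefl : ∑ l ∈ Finset.range d, θ (d - l)
          = ∑ l ∈ Finset.range d, θ (l + 1) := by
        rw [← Finset.sum_range_reflect (fun l => θ (l + 1)) d]
        apply Finset.sum_congr rfl
        intro l hl
        simp only [Finset.mem_range] at hl
        congr 1
        omega
      rw [Finset.sum_sub_distrib, hrefl, ← Finset.sum_sub_distrib,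
        Finset.sum_range_sub' θ d]
    rw [hnum, div_self h0d]
  have e1 := hE 1 le_rfl (by omega)
  have ed := hE d (by omega) le_rfl
  have f1 := hF 1 le_rfl (by omega)
  have fd := hF d (by omega) le_rfl
  rw [S1] at e1 f1
  rw [Sd] at ed fd
  simp only [Nat.sub_self, hd1, Nat.sub_zero] at e1 ed f1 fd
  intro heq
  rw [ed, fd, e1] at heq
  have key : (θs 0 - θs d) * (θ (d - 1) - θ 1) = 0 := by
    linear_combination heq
  rcases mul_eq_zero.mp key with h | h
  · exact hs0d h
  · exact h1d1 h
end

section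
/- Let p be a parameter array over F of diameter d with fundamental parameter β, and suppose β ≠ 2 and β ≠ -2 (type I). Let q be a nonzero element of F with β = q + q^{-1}. Then q^i ≠ 1 for 1 ≤ i ≤ d, and for 0 ≤ i ≤ d: θ_i = θ_0 - (q^i - 1)(q^{2d-i-1} - 1)(θ_0 - θ_d)/((q^{d-1} - 1)(q^d - 1)) + (q^i - 1)(q^{d-i} - 1)(ϕ_1 - φ_d)/((q - 1)(q^{d-1} - 1)(θ*_0 - θ*_d)), and θ*_i = θ*_0 - (q^i - 1)(q^{2d-i-1} - 1)(θ*_0 - θ*_d)/((q^{d-1} - 1)(q^d - 1)) + (q^i - 1)(q^{d-i} - 1)(ϕ_d - φ_d)/((q - 1)(q^{d-1} - 1)(θ_0 - θ_d)). -/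
open Finset

private lemma formula_step {F : Type*} [Field F] {T T0 N1 D1 N2 D2 : F}
    (h1 : D1 ≠ 0) (h2 : D2 ≠ 0)
    (h : (T - T0) * (D1 * D2) = N2 * D1 - N1 * D2) :
    T = T0 - N1 / D1 + N2 / D2 := by
  field_simp
  linear_combination h

private lemma closed_form {F : Type*} [Field F] (d : ℕ) (f : ℕ → F) (q : F)
    (hq : q ≠ 0) (hq1 : q ≠ 1) (hqm : q ≠ -1)
    (hrec : ∀ n, n + 3 ≤ d → f n - f (n + 3) = (q + q⁻¹ + 1) * (f (n + 1) - f (n + 2))) :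
    ∃ a b c : F, ∀ i, i ≤ d → f i = a + b * q ^ i + c * q ^ (d - i) := by
  have h1 : q - 1 ≠ 0 := sub_ne_zero.mpr hq1
  have h2 : q + 1 ≠ 0 := fun h => hqm (by linear_combination h)
  have h3 : q ^ 2 - 1 ≠ 0 := by
    intro h
    rcases mul_eq_zero.mp (show (q - 1) * (q + 1) = 0 by linear_combination h) with h' | h'
    exacts [h1 h', h2 h']
  have h4 : q ^ 2 - q ≠ 0 := by
    intro h
    rcases mul_eq_zero.mp (show q * (q - 1) = 0 by linear_combination h) with h' | h'
    exacts [hq h', h1 h']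
  have hqq : q * q⁻¹ = 1 := mul_inv_cancel₀ hq
  set g : ℕ → F := fun i => q ^ i * f i with hg
  have grec : ∀ n, n + 3 ≤ d →
      g (n + 3) = q ^ 3 * g n - (q ^ 3 + q ^ 2 + q) * g (n + 1) + (q ^ 2 + q + 1) * g (n + 2) := by
    intro n hn
    have hr := hrec n hn
    simp only [hg]
    linear_combination (-(q ^ (n + 3))) * hr +
      (q ^ (n + 2) * (f (n + 2) - f (n + 1))) * hqq
  set b : F := ((g 2 - g 0) - (q + 1) * (g 1 - g 0)) / ((q ^ 2 - 1) * (q ^ 2 - q)) with hb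
  set a : F := ((g 1 - g 0) - b * (q ^ 2 - 1)) / (q - 1) with ha
  set c : F := g 0 - a - b with hc
  clear_value g
  have claim : ∀ i, i ≤ d → g i = a * q ^ i + b * (q ^ i) ^ 2 + c := by
    intro i
    induction i using Nat.strong_induction_on with
    | _ i ih =>
      rcases i with _ | _ | _ | n
      · intro _; rw [hc]; ring
      · intro _
        rw [hc, ha, hb]
        field_simp
        ring
      · intro _
        rw [hc, ha, hb]
        field_simp
        ring
      · intro hle
        have e0 := ih n (by omega) (by omega)
        have e1 := ih (n+1) (by omega) (by omega)
        have e2 := ih (n+2) (by omega) (by omega)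
        have hr := grec n (by omega)
        rw [e0, e1, e2] at hr
        show g (n + 1 + 1 + 1) = _
        have h311 : n + 1 + 1 + 1 = n + 3 := by omega
        rw [h311, hr]
        ring
  have hd0 : (q : F) ^ d ≠ 0 := pow_ne_zero _ hq
  have hw : q ^ d * (q ^ d)⁻¹ = 1 := mul_inv_cancel₀ hd0
  refine ⟨a, b, c * (q ^ d)⁻¹, ?_⟩
  intro i hi
  have hgi := claim i hi
  simp only [hg] at hgi
  have hZX : q ^ (d - i) * q ^ i = q ^ d := by
    rw [← pow_add]; congr 1; omega
  apply mul_left_cancel₀ (pow_ne_zero i hq)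
  rw [hgi]
  linear_combination (-(c * (q ^ d)⁻¹)) * hZX - c * hw

/-- Type I eigenvalue formulas: `θ i` and `θs i` in terms of the end-parameters
and `q`, where `β = q + q⁻¹`, `β ≠ ±2`. -/
theorem theta_formulas_typeI
    {F : Type*} [Field F] [IsAlgClosed F] (d : ℕ) (hd : 3 ≤ d)
    (θ θs φ ϕ : ℕ → F) (β q : F)
    (hp : IsParameterArray d θ θs φ ϕ β)
    (hβ : β ≠ 2) (hβ' : β ≠ -2)
    (hq : q ≠ 0) (hβq : β = q + q⁻¹) :
    (∀ i, 1 ≤ i → i ≤ d → q ^ i ≠ 1) ∧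
    (∀ i, i ≤ d →
      θ i = θ 0
        - (q ^ i - 1) * (q ^ (2 * d - i - 1) - 1) * (θ 0 - θ d)
            / ((q ^ (d - 1) - 1) * (q ^ d - 1))
        + (q ^ i - 1) * (q ^ (d - i) - 1) * (ϕ 1 - φ d)
            / ((q - 1) * (q ^ (d - 1) - 1) * (θs 0 - θs d)) ∧
      θs i = θs 0
        - (q ^ i - 1) * (q ^ (2 * d - i - 1) - 1) * (θs 0 - θs d)
            / ((q ^ (d - 1) - 1) * (q ^ d - 1))
        + (q ^ i - 1) * (q ^ (d - i) - 1) * (ϕ d - φ d)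
            / ((q - 1) * (q ^ (d - 1) - 1) * (θ 0 - θ d))) := by
  obtain ⟨hθ, hθs, hφ, hϕ, hEφ, hEϕ, hβv⟩ := hp
  have hq1 : q ≠ 1 := by
    rintro rfl
    exact hβ (by rw [hβq]; norm_num)
  have hqm : q ≠ -1 := by
    rintro rfl
    apply hβ'
    rw [hβq]
    norm_num
  have hβ1 : β + 1 = q + q⁻¹ + 1 := by rw [hβq]
  have recθ : ∀ n, n + 3 ≤ d → θ n - θ (n+3) = (q + q⁻¹ + 1) * (θ (n+1) - θ (n+2)) := by
    intro n hn
    have h := (hβv (n+2) (by omega) (by omega)).1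
    have hne : θ (n+1) - θ (n+2) ≠ 0 :=
      sub_ne_zero.mpr (hθ (n+1) (n+2) (by omega) (by omega))
    have h2 : (n+2) - 2 = n := by omega
    have h3 : (n+2) - 1 = n + 1 := by omega
    have h4 : (n+2) + 1 = n + 3 := by omega
    rw [h2, h3, h4, div_eq_iff hne] at h
    rw [← hβ1, h]
  have recθs : ∀ n, n + 3 ≤ d → θs n - θs (n+3) = (q + q⁻¹ + 1) * (θs (n+1) - θs (n+2)) := by
    intro n hn
    have h := (hβv (n+2) (by omega) (by omega)).2
    have hne : θs (n+1) - θs (n+2) ≠ 0 :=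
      sub_ne_zero.mpr (hθs (n+1) (n+2) (by omega) (by omega))
    have h2 : (n+2) - 2 = n := by omega
    have h3 : (n+2) - 1 = n + 1 := by omega
    have h4 : (n+2) + 1 = n + 3 := by omega
    rw [h2, h3, h4, div_eq_iff hne] at h
    rw [← hβ1, h]
  obtain ⟨a, b, c, hf⟩ := closed_form d θ q hq hq1 hqm recθ
  obtain ⟨as, bs, cs, hfs⟩ := closed_form d θs q hq hq1 hqm recθs
  have part1 : ∀ i, 1 ≤ i → i ≤ d → q ^ i ≠ 1 := by
    intro i h1 h2 hqi
    apply hθ 0 i (by omega) h2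
    have hZd : q ^ (d - i) * q ^ i = q ^ d := by
      rw [← pow_add]; congr 1; omega
    rw [hqi, mul_one] at hZd
    rw [hf 0 (by omega), hf i h2, hqi, hZd]
    norm_num
  have h0d : 0 < d := by omega
  have htd : θ 0 - θ d ≠ 0 := sub_ne_zero.mpr (hθ 0 d h0d le_rfl)
  have hts : θs 0 - θs d ≠ 0 := sub_ne_zero.mpr (hθs 0 d h0d le_rfl)
  have hq1' : q - 1 ≠ 0 := sub_ne_zero.mpr hq1
  have hYne : q ^ d - 1 ≠ 0 := sub_ne_zero.mpr (part1 d (by omega) le_rfl)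
  have hPne : q ^ (d - 1) - 1 ≠ 0 := sub_ne_zero.mpr (part1 (d - 1) (by omega) (by omega))
  have hPq : q ^ (d - 1) * q = q ^ d := by
    rw [← pow_succ]
    congr 1
    omega
  have hYne' : q ^ (d - 1) * q - 1 ≠ 0 := by rw [hPq]; exact hYne
  have hS1 : ∑ l ∈ range 1, (θ l - θ (d - l)) / (θ 0 - θ d) = 1 := by
    rw [Finset.sum_range_one]
    simp only [Nat.sub_zero]
    exact div_self htd
  have hSd : ∑ l ∈ range d, (θ l - θ (d - l)) / (θ 0 - θ d) = 1 := by
    rw [← Finset.sum_div, div_eq_one_iff_eq htd]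
    have e1 : ∑ l ∈ range d, (θ l - θ (d - l)) = ∑ l ∈ range d, (θ l - θ (l + 1)) := by
      rw [Finset.sum_sub_distrib, Finset.sum_sub_distrib]
      congr 1
      rw [← Finset.sum_range_reflect (fun l => θ (l + 1)) d]
      apply Finset.sum_congr rfl
      intro l hl
      rw [Finset.mem_range] at hl
      congr 1
      omega
    rw [e1, Finset.sum_range_sub']
  have hF1 : ϕ 1 - φ d = (θs 0 - θs d) * (θ (d - 1) - θ d) := by
    have h := hEφ d (by omega) le_rfl
    rw [hSd] at h
    linear_combination -h
  have hφ1 : φ 1 = ϕ 1 + (θs 1 - θs 0) * (θ 0 - θ d) := by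
    have h := hEφ 1 le_rfl (by omega)
    rw [hS1] at h
    norm_num at h
    linear_combination h
  have hϕd : ϕ d = φ 1 + (θs d - θs 0) * (θ 1 - θ 0) := by
    have h := hEϕ d (by omega) le_rfl
    rw [hSd] at h
    have h0 : d - d + 1 = 1 := by omega
    rw [h0] at h
    linear_combination h
  have hde : d - (d - 1) = 1 := by omega
  have hF2 : ϕ d - φ d = (θ 0 - θ d) * (θs (d - 1) - θs d) := by
    have e0 := hf 0 (by omega)
    have e1 := hf 1 (by omega)
    have ed1 := hf (d - 1) (by omega)
    have ed := hf d le_rfl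
    have es0 := hfs 0 (by omega)
    have es1 := hfs 1 (by omega)
    have esd1 := hfs (d - 1) (by omega)
    have esd := hfs d le_rfl
    have hφd' := hEφ d (by omega) le_rfl
    rw [hSd] at hφd'
    simp only [Nat.sub_zero, Nat.sub_self, pow_zero, pow_one, mul_one] at e0 e1 ed ed1 es0 es1 esd esd1
    rw [hde, pow_one] at ed1 esd1
    rw [hϕd, hφ1, hφd', e0, e1, ed1, ed, es0, es1, esd1, esd, ← hPq]
    ring
  refine ⟨part1, ?_⟩
  intro i hi
  have e0 := hf 0 (by omega)
  have ei := hf i hi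
  have ed1 := hf (d - 1) (by omega)
  have ed := hf d le_rfl
  have es0 := hfs 0 (by omega)
  have esi := hfs i hi
  have esd1 := hfs (d - 1) (by omega)
  have esd := hfs d le_rfl
  simp only [Nat.sub_zero, Nat.sub_self, pow_zero, pow_one, mul_one] at e0 ed es0 esd
  rw [hde, pow_one] at ed1 esd1
  have hXZ' : q ^ i * q ^ (d - i) = q ^ (d - 1) * q := by
    rw [hPq, ← pow_add]; congr 1; omega
  have hW : q ^ (d - 1) * q ^ (d - i) = q ^ (2 * d - i - 1) := by
    rw [← pow_add]; congr 1; omega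
  have hD1 : (q ^ (d - 1) - 1) * (q ^ (d - 1) * q - 1) ≠ 0 := mul_ne_zero hPne hYne'
  constructor
  · rw [hF1, ei, e0, ed1, ed, ← hW, ← hPq]
    exact formula_step hD1 (mul_ne_zero (mul_ne_zero hq1' hPne) hts)
      (by linear_combination (c * (q ^ (d - 1) - 1) ^ 2 * (q - 1) * (q ^ (d - 1) * q - 1)
            * (θs 0 - θs d)) * hXZ')
  · rw [hF2, esi, es0, esd1, esd, ← hW, ← hPq]
    exact formula_step hD1 (mul_ne_zero (mul_ne_zero hq1' hPne) htd)
      (by linear_combination (cs * (q ^ (d - 1) - 1) ^ 2 * (q - 1) * (q ^ (d - 1) * q - 1)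
            * (θ 0 - θ d)) * hXZ')
end

section
/- Let p be a parameter array over F of diameter d with fundamental parameter β, and suppose β = 2 and Char(F) ≠ 2 (type II). Then d·1_F ≠ 0 and (d-1)·1_F ≠ 0 in F, and for 0 ≤ i ≤ d: θ_i = θ_0 - i(2d-i-1)(θ_0 - θ_d)/(d(d-1)) + i(d-i)(ϕ_1 - φ_d)/((d-1)(θ*_0 - θ*_d)), and θ*_i = θ*_0 - i(2d-i-1)(θ*_0 - θ*_d)/(d(d-1)) + i(d-i)(ϕ_d - φ_d)/((d-1)(θ_0 - θ_d)). -/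
open Finset

lemma quad_of_rec' {F : Type*} [Field F] (h2 : (2:F) ≠ 0) (d : ℕ) (f : ℕ → F)
    (hrec : ∀ k, k + 3 ≤ d → f (k+3) = f k - 3 * (f (k+1) - f (k+2))) :
    ∃ B C : F, ∀ i, i ≤ d → f i = f 0 + B * i + C * (i:F)^2 := by
  refine ⟨(f 1 - f 0) - (f 2 - 2*f 1 + f 0)/2, (f 2 - 2*f 1 + f 0)/2, ?_⟩
  intro i
  induction i using Nat.strong_induction_on with
  | _ i ih =>
    intro hi
    rcases i with _ | _ | _ | k
    · norm_num
    · push_cast; field_simp; ring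
    · push_cast; field_simp; ring
    · have e0 := ih k (by omega) (by omega)
      have e1 := ih (k+1) (by omega) (by omega)
      have e2 := ih (k+2) (by omega) (by omega)
      rw [hrec k (by omega), e0, e1, e2]
      push_cast; ring

/-- Type II eigenvalue formulas: if `β = 2` and `Char(F) ≠ 2`, then `d` and `d-1`
do not vanish in `F`, and `θ i`, `θs i` are given in terms of the end-parameters. -/
theorem theta_formulas_typeII
    {F : Type*} [Field F] [IsAlgClosed F] (d : ℕ) (hd : 3 ≤ d)
    (θ θs φ ϕ : ℕ → F) (β : F)
    (hp : IsParameterArray d θ θs φ ϕ β)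
    (hβ : β = 2) (hchar : ringChar F ≠ 2) :
    (d : F) ≠ 0 ∧ ((d - 1 : ℕ) : F) ≠ 0 ∧
    (∀ i, i ≤ d →
      θ i = θ 0
        - (i : F) * ((2 * d - i - 1 : ℕ) : F) * (θ 0 - θ d)
            / ((d : F) * ((d - 1 : ℕ) : F))
        + (i : F) * ((d - i : ℕ) : F) * (ϕ 1 - φ d)
            / (((d - 1 : ℕ) : F) * (θs 0 - θs d)) ∧
      θs i = θs 0
        - (i : F) * ((2 * d - i - 1 : ℕ) : F) * (θs 0 - θs d)
            / ((d : F) * ((d - 1 : ℕ) : F))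
        + (i : F) * ((d - i : ℕ) : F) * (ϕ d - φ d)
            / (((d - 1 : ℕ) : F) * (θ 0 - θ d))) := by
  obtain ⟨hθ, hθs, hφ, hϕ, hiii, hiv, hv⟩ := hp
  have h2 : (2:F) ≠ 0 := Ring.two_ne_zero hchar
  have hβ3 : β + 1 = 3 := by rw [hβ]; norm_num
  have hD : θ 0 - θ d ≠ 0 := sub_ne_zero.mpr (hθ 0 d (by omega) le_rfl)
  have hDs : θs 0 - θs d ≠ 0 := sub_ne_zero.mpr (hθs 0 d (by omega) le_rfl)
  -- the recurrences
  have hrecθ : ∀ k, k + 3 ≤ d → θ (k+3) = θ k - 3 * (θ (k+1) - θ (k+2)) := by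
    intro k hk
    have h := (hv (k+2) (by omega) (by omega)).1
    rw [hβ3] at h
    simp only [show k+2-2 = k from by omega, show k+2-1 = k+1 from by omega,
      show k+2+1 = k+3 from by omega] at h
    have hne : θ (k+1) - θ (k+2) ≠ 0 :=
      sub_ne_zero.mpr (hθ (k+1) (k+2) (by omega) (by omega))
    rw [div_eq_iff hne] at h
    linear_combination -h
  have hrecθs : ∀ k, k + 3 ≤ d → θs (k+3) = θs k - 3 * (θs (k+1) - θs (k+2)) := by
    intro k hk
    have h := (hv (k+2) (by omega) (by omega)).2
    rw [hβ3] at h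
    simp only [show k+2-2 = k from by omega, show k+2-1 = k+1 from by omega,
      show k+2+1 = k+3 from by omega] at h
    have hne : θs (k+1) - θs (k+2) ≠ 0 :=
      sub_ne_zero.mpr (hθs (k+1) (k+2) (by omega) (by omega))
    rw [div_eq_iff hne] at h
    linear_combination -h
  obtain ⟨B, C, hq⟩ := quad_of_rec' h2 d θ hrecθ
  obtain ⟨B', C', hq'⟩ := quad_of_rec' h2 d θs hrecθs
  -- nonvanishing of integers up to d
  have hkey : ∀ n : ℕ, 0 < n → n ≤ d → (n : F) ≠ 0 := by
    intro n hn hnd hcast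
    haveI := ringChar.charP F
    have hdvd : ringChar F ∣ n := (CharP.cast_eq_zero_iff F (ringChar F) n).mp hcast
    have hpos : 0 < ringChar F := by
      rcases Nat.eq_zero_or_pos (ringChar F) with h0 | h
      · rw [h0] at hdvd; exact absurd (zero_dvd_iff.mp hdvd) (by omega)
      · exact h
    have hle : ringChar F ≤ d := le_trans (Nat.le_of_dvd hn hdvd) hnd
    exact hθ 0 (ringChar F) hpos hle
      (by rw [hq (ringChar F) hle, CharP.cast_eq_zero F (ringChar F)]; ring)
  have hd0 : (d : F) ≠ 0 := hkey d (by omega) le_rfl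
  have hd1 : ((d - 1 : ℕ) : F) ≠ 0 := hkey (d-1) (by omega) (by omega)
  -- telescoping sum
  have hsum : ∑ l ∈ Finset.range d, (θ l - θ (d - l)) / (θ 0 - θ d) = 1 := by
    rw [← Finset.sum_div]
    have h1 : ∑ l ∈ Finset.range d, θ (d - l) = ∑ l ∈ Finset.range d, θ (l + 1) := by
      rw [← Finset.sum_range_reflect (fun l => θ (l + 1)) d]
      apply Finset.sum_congr rfl
      intro j hj
      simp only [Finset.mem_range] at hj
      congr 1
      omega
    have h2' : ∑ l ∈ Finset.range d, (θ l - θ (d - l)) = θ 0 - θ d := by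
      rw [Finset.sum_sub_distrib, h1]
      have e1 := Finset.sum_range_succ θ d
      have e2 := Finset.sum_range_succ' θ d
      rw [e2] at e1
      linear_combination -e1
    rw [h2', div_self hD]
  -- key identities
  have hφd : φ d = ϕ 1 + (θs d - θs 0) * (θ (d - 1) - θ d) := by
    have h := hiii d (by omega) le_rfl
    rw [hsum] at h
    linear_combination h
  have hϕd : ϕ d = φ 1 + (θs d - θs 0) * (θ 1 - θ 0) := by
    have h := hiv d (by omega) le_rfl
    rw [hsum, show d - d + 1 = 1 from by omega] at h
    linear_combination h
  have hφ1 : φ 1 = ϕ 1 + (θs 1 - θs 0) * (θ 0 - θ d) := by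
    have h := hiii 1 le_rfl (by omega)
    rw [Finset.sum_range_one] at h
    simp only [Nat.sub_zero, Nat.sub_self] at h
    rw [div_self hD] at h
    linear_combination h
  -- cast lemmas
  have hcd1 : ((d - 1 : ℕ) : F) = (d:F) - 1 := by
    rw [Nat.cast_sub (by omega)]; norm_num
  have hd1' : (d:F) - 1 ≠ 0 := by rw [← hcd1]; exact hd1
  refine ⟨hd0, hd1, ?_⟩
  intro i hi
  have hc2 : ((2 * d - i - 1 : ℕ) : F) = 2*(d:F) - (i:F) - 1 := by
    rw [show 2*d - i - 1 = 2*d - i - 1 from rfl, Nat.cast_sub (by omega : 1 ≤ 2*d - i),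
      Nat.cast_sub (by omega : i ≤ 2*d)]
    push_cast; ring
  have hc3 : ((d - i : ℕ) : F) = (d:F) - (i:F) := by
    rw [Nat.cast_sub hi]
  constructor
  · rw [hcd1, hc2, hc3]
    field_simp
    rw [hφd, hq i hi, hq d le_rfl, hq (d-1) (by omega), hcd1]
    ring
  · rw [hcd1, hc2, hc3]
    field_simp
    rw [hϕd, hφd, hφ1, hq' i hi, hq' d le_rfl, hq' 1 (by omega),
      hq 1 (by omega), hq d le_rfl, hq (d-1) (by omega), hcd1]
    ring
end

section
/- Let p be a parameter array over F of diameter d with fundamental parameter β, and suppose β = -2, Char(F) ≠ 2, and d is even (type III+). Then d·1_F ≠ 0 in F, and for 0 ≤ i ≤ d: if i is even then θ_i = θ_0 - i(θ_0 - θ_d)/d and θ*_i = θ*_0 - i(θ*_0 - θ*_d)/d; if i is odd then θ_i = θ_0 - (2d-i-1)(θ_0 - θ_d)/d + (ϕ_1 - φ_d)/(θ*_0 - θ*_d) and θ*_i = θ*_0 - (2d-i-1)(θ*_0 - θ*_d)/d + (ϕ_d - φ_d)/(θ_0 - θ_d). -/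
open Finset

/-- Type III⁺ eigenvalue formulas: `β = -2`, `Char(F) ≠ 2`, `d` even. -/
theorem theta_formulas_typeIIIplus
    {F : Type*} [Field F] [IsAlgClosed F] (d : ℕ) (hd : 3 ≤ d)
    (θ θs φ ϕ : ℕ → F) (β : F)
    (hp : IsParameterArray d θ θs φ ϕ β)
    (hβ : β = -2) (hchar : ringChar F ≠ 2) (hdeven : Even d) :
    (d : F) ≠ 0 ∧
    (∀ i, i ≤ d →
      (Even i →
        θ i = θ 0 - (i : F) * (θ 0 - θ d) / (d : F) ∧
        θs i = θs 0 - (i : F) * (θs 0 - θs d) / (d : F)) ∧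
      (Odd i →
        θ i = θ 0 - ((2 * d - i - 1 : ℕ) : F) * (θ 0 - θ d) / (d : F)
            + (ϕ 1 - φ d) / (θs 0 - θs d) ∧
        θs i = θs 0 - ((2 * d - i - 1 : ℕ) : F) * (θs 0 - θs d) / (d : F)
            + (ϕ d - φ d) / (θ 0 - θ d))) := by
  obtain ⟨hθinj, hθsinj, hφne, hϕne, hiii, hiv, hv⟩ := hp
  subst hβ
  have h2 : (2:F) ≠ 0 := Ring.two_ne_zero hchar
  obtain ⟨m', hm'⟩ := hdeven
  set m : ℕ := m' with hmdef
  have hm : d = 2 * m := by omega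
  have hm2 : 2 ≤ m := by omega
  -- recurrences from condition (v)
  have hrec : ∀ j, j + 3 ≤ d → θ (j+3) = θ j + θ (j+1) - θ (j+2) := by
    intro j hj
    have h := (hv (j+2) (by omega) (by omega)).1
    have e1 : j + 2 - 2 = j := by omega
    have e2 : j + 2 - 1 = j + 1 := by omega
    rw [e1, e2] at h
    have hne : θ (j+1) - θ (j+2) ≠ 0 :=
      sub_ne_zero.mpr (hθinj (j+1) (j+2) (by omega) (by omega))
    rw [div_eq_iff hne] at h
    have : j + 2 + 1 = j + 3 := by omega
    rw [this] at h
    linear_combination -h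
  have hrecs : ∀ j, j + 3 ≤ d → θs (j+3) = θs j + θs (j+1) - θs (j+2) := by
    intro j hj
    have h := (hv (j+2) (by omega) (by omega)).2
    have e1 : j + 2 - 2 = j := by omega
    have e2 : j + 2 - 1 = j + 1 := by omega
    rw [e1, e2] at h
    have hne : θs (j+1) - θs (j+2) ≠ 0 :=
      sub_ne_zero.mpr (hθsinj (j+1) (j+2) (by omega) (by omega))
    rw [div_eq_iff hne] at h
    have : j + 2 + 1 = j + 3 := by omega
    rw [this] at h
    linear_combination -h
  -- generic step lemma
  have key : ∀ (f : ℕ → F), (∀ j, j + 3 ≤ d → f (j+3) = f j + f (j+1) - f (j+2)) →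
      ∀ i, i + 2 ≤ d → f (i+2) = f i + (-1:F)^i * (f 2 - f 0) := by
    intro f hrec i
    induction i with
    | zero => intro _; show f 2 = f 0 + (-1:F)^0 * (f 2 - f 0); ring
    | succ j ih =>
      intro h
      have h1 := hrec j (by omega)
      have h2 := ih (by omega)
      show f (j+3) = f (j+1) + (-1:F)^(j+1) * (f 2 - f 0)
      linear_combination h1 - h2
  have keyE : ∀ (f : ℕ → F) (c' : F), (∀ i, i + 2 ≤ d → f (i+2) = f i + (-1:F)^i * c') →
      ∀ k, 2 * k ≤ d → f (2*k) = f 0 + (k:F) * c' := by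
    intro f c' hstep k
    induction k with
    | zero => simp
    | succ k ih =>
      intro h
      have h1 := hstep (2*k) (by omega)
      have h2 := ih (by omega)
      have hp1 : (-1:F)^(2*k) = 1 := by rw [pow_mul]; norm_num
      rw [hp1] at h1
      have e : 2 * (k+1) = 2*k + 2 := by omega
      rw [e]
      push_cast
      linear_combination h1 + h2
  have keyO : ∀ (f : ℕ → F) (c' : F), (∀ i, i + 2 ≤ d → f (i+2) = f i + (-1:F)^i * c') →
      ∀ k, 2 * k + 1 ≤ d → f (2*k+1) = f 1 - (k:F) * c' := by
    intro f c' hstep k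
    induction k with
    | zero => simp
    | succ k ih =>
      intro h
      have h1 := hstep (2*k+1) (by omega)
      have h2 := ih (by omega)
      have hp1 : (-1:F)^(2*k+1) = -1 := by rw [pow_succ, pow_mul]; norm_num
      rw [hp1] at h1
      have e : 2 * (k+1) + 1 = (2*k+1) + 2 := by omega
      rw [e]
      push_cast
      linear_combination h1 + h2
  set c : F := θ 2 - θ 0 with hcdef
  set cs : F := θs 2 - θs 0 with hcsdef
  have hstepθ := key θ hrec
  have hstepθs := key θs hrecs
  have hEθ := keyE θ c hstepθ
  have hOθ := keyO θ c hstepθ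
  have hEθs := keyE θs cs hstepθs
  have hOθs := keyO θs cs hstepθs
  have hθd : θ d = θ 0 + (m:F) * c := by
    have := hEθ m (by omega); rw [← hm] at this; exact this
  have hθsd : θs d = θs 0 + (m:F) * cs := by
    have := hEθs m (by omega); rw [← hm] at this; exact this
  have hθ0d : θ 0 - θ d ≠ 0 := sub_ne_zero.mpr (hθinj 0 d (by omega) le_rfl)
  have hθs0d : θs 0 - θs d ≠ 0 := sub_ne_zero.mpr (hθsinj 0 d (by omega) le_rfl)
  have hmc : (m:F) * c ≠ 0 := by
    intro h
    apply hθ0d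
    rw [hθd, h]; ring
  have hmne : (m:F) ≠ 0 := fun h => hmc (by rw [h]; ring)
  have hcne : c ≠ 0 := fun h => hmc (by rw [h]; ring)
  have hdcast : (d:F) = 2 * (m:F) := by rw [hm]; push_cast; ring
  have hdne : (d:F) ≠ 0 := by rw [hdcast]; exact mul_ne_zero h2 hmne
  have hθd1 : θ (d - 1) = θ 1 - ((m:F) - 1) * c := by
    have h := hOθ (m-1) (by omega)
    have e : 2 * (m-1) + 1 = d - 1 := by omega
    rw [e] at h
    rw [h, Nat.cast_sub (by omega)]
    push_cast; ring
  have hθsd1 : θs (d - 1) = θs 1 - ((m:F) - 1) * cs := by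
    have h := hOθs (m-1) (by omega)
    have e : 2 * (m-1) + 1 = d - 1 := by omega
    rw [e] at h
    rw [h, Nat.cast_sub (by omega)]
    push_cast; ring
  -- the telescoping sum
  have hsum : (∑ l ∈ Finset.range d, (θ l - θ (d - l)) / (θ 0 - θ d)) = 1 := by
    rw [← Finset.sum_div, div_eq_one_iff_eq hθ0d]
    have hrefl : ∑ l ∈ Finset.range d, θ (d - l) = ∑ l ∈ Finset.range d, θ (l + 1) := by
      rw [← Finset.sum_range_reflect (fun l => θ (l + 1)) d]
      apply Finset.sum_congr rfl
      intro j hj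
      have := Finset.mem_range.mp hj
      congr 1; omega
    have hshift : ∑ l ∈ Finset.range d, θ (l + 1)
        = (∑ l ∈ Finset.range d, θ l) - θ 0 + θ d := by
      have h1 := Finset.sum_range_succ' θ d
      have h2 := Finset.sum_range_succ θ d
      rw [h2] at h1
      linear_combination -h1
    rw [Finset.sum_sub_distrib, hrefl, hshift]
    ring
  have hφd : φ d = ϕ 1 + (θs d - θs 0) * (θ (d - 1) - θ d) := by
    have h := hiii d (by omega) le_rfl
    rw [hsum, mul_one] at h
    exact h
  have hϕd : ϕ d = φ 1 + (θs d - θs 0) * (θ 1 - θ 0) := by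
    have h := hiv d (by omega) le_rfl
    rw [hsum, mul_one] at h
    have e : d - d + 1 = 1 := by omega
    rw [e] at h
    exact h
  have hφ1 : φ 1 = ϕ 1 + (θs 1 - θs 0) * (θ 0 - θ d) := by
    have h := hiii 1 le_rfl (by omega)
    rw [Finset.sum_range_one] at h
    have e : d - 0 = d := by omega
    rw [e, div_self hθ0d, mul_one] at h
    simpa using h
  have hc1 : (ϕ 1 - φ d) / (θs 0 - θs d) = θ (d - 1) - θ d := by
    rw [hφd]
    field_simp
    ring
  have hc2 : (ϕ d - φ d) / (θ 0 - θ d) = (θs 1 - θs 0) - (2 * (m:F) - 1) * cs := by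
    rw [hϕd, hφd, hφ1, hθd, hθsd, hθd1]
    field_simp
    ring
  refine ⟨hdne, ?_⟩
  intro i hi
  constructor
  · intro hieven
    obtain ⟨k, hk⟩ := hieven
    have hik : i = 2 * k := by omega
    subst hik
    constructor
    · rw [hEθ k (by omega), hθd, hdcast]
      push_cast
      field_simp
      ring
    · rw [hEθs k (by omega), hθsd, hdcast]
      push_cast
      field_simp
      ring
  · intro hiodd
    obtain ⟨k, hk⟩ := hiodd
    subst hk
    have hcast : ((2 * d - (2 * k + 1) - 1 : ℕ) : F) = 2 * (d:F) - 2 * (k:F) - 2 := by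
      have h : (2 * d - (2 * k + 1) - 1) + (2 * k + 2) = 2 * d := by omega
      have := congrArg (Nat.cast : ℕ → F) h
      push_cast at this
      linear_combination this
    constructor
    · rw [hOθ k (by omega), hc1, hcast, hθd1, hθd, hdcast]
      field_simp
      ring
    · rw [hOθs k (by omega), hc2, hcast, hθsd, hdcast]
      field_simp
      ring
end

section
/- Let p be a parameter array over F of diameter d with fundamental parameter β, and suppose β = -2, Char(F) ≠ 2, and d is odd (type III−). Then (d-1)·1_F ≠ 0 in F, and for 0 ≤ i ≤ d: if i is even then θ_i = θ_0 - i(θ_0 - θ_d)/(d-1) + i(ϕ_1 - φ_d)/((d-1)(θ*_0 - θ*_d)) and θ*_i = θ*_0 - i(θ*_0 - θ*_d)/(d-1) + i(ϕ_d - φ_d)/((d-1)(θ_0 - θ_d)); if i is odd then θ_i = θ_0 - (2d-i-1)(θ_0 - θ_d)/(d-1) + (d-i)(ϕ_1 - φ_d)/((d-1)(θ*_0 - θ*_d)) and θ*_i = θ*_0 - (2d-i-1)(θ*_0 - θ*_d)/(d-1) + (d-i)(ϕ_d - φ_d)/((d-1)(θ_0 - θ_d)). -/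
open Finset

private lemma parity_step {F : Type*} [Field F] {d : ℕ} {f : ℕ → F}
    (hrec : ∀ i, i + 3 ≤ d → f (i+3) = f i + f (i+1) - f (i+2)) (k : ℕ) :
    (2*k ≤ d → f (2*k) = f 0 + (k:F) * (f 2 - f 0)) ∧
    (2*k+1 ≤ d → f (2*k+1) = f 1 - (k:F) * (f 2 - f 0)) ∧
    (2*k+2 ≤ d → f (2*k+2) = f 0 + ((k:F)+1) * (f 2 - f 0)) := by
  induction k with
  | zero =>
    refine ⟨fun _ => by norm_num, fun _ => by norm_num, fun _ => by norm_num⟩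
  | succ k ih =>
    obtain ⟨ih0, ih1, ih2⟩ := ih
    have o1 : 2*k+3 ≤ d → f (2*k+3) = f 1 - ((k:F)+1) * (f 2 - f 0) := by
      intro h
      have hr := hrec (2*k) h
      rw [hr, ih0 (by omega), ih1 (by omega), ih2 (by omega)]
      ring
    have o2 : 2*k+4 ≤ d → f (2*k+4) = f 0 + ((k:F)+2) * (f 2 - f 0) := by
      intro h
      have hr := hrec (2*k+1) (by omega)
      simp only [show 2*k+1+3 = 2*k+4 by omega, show 2*k+1+1 = 2*k+2 by omega,
        show 2*k+1+2 = 2*k+3 by omega] at hr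
      rw [hr, ih1 (by omega), ih2 (by omega), o1 (by omega)]
      ring
    refine ⟨?_, ?_, ?_⟩
    · intro h
      have e : 2*(k+1) = 2*k+2 := by ring
      rw [e] at h ⊢
      rw [ih2 h]; push_cast; ring
    · intro h
      have e : 2*(k+1)+1 = 2*k+3 := by ring
      rw [e] at h ⊢
      rw [o1 h]; push_cast; ring
    · intro h
      have e : 2*(k+1)+2 = 2*k+4 := by ring
      rw [e] at h ⊢
      rw [o2 h]; push_cast; ring


/-- Type III⁻ eigenvalue formulas: `β = -2`, `Char(F) ≠ 2`, `d` odd. -/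
theorem theta_formulas_typeIIIminus
    {F : Type*} [Field F] [IsAlgClosed F] (d : ℕ) (hd : 3 ≤ d)
    (θ θs φ ϕ : ℕ → F) (β : F)
    (hp : IsParameterArray d θ θs φ ϕ β)
    (hβ : β = -2) (hchar : ringChar F ≠ 2) (hdodd : Odd d) :
    ((d - 1 : ℕ) : F) ≠ 0 ∧
    (∀ i, i ≤ d →
      (Even i →
        θ i = θ 0 - (i : F) * (θ 0 - θ d) / ((d - 1 : ℕ) : F)
            + (i : F) * (ϕ 1 - φ d) / (((d - 1 : ℕ) : F) * (θs 0 - θs d)) ∧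
        θs i = θs 0 - (i : F) * (θs 0 - θs d) / ((d - 1 : ℕ) : F)
            + (i : F) * (ϕ d - φ d) / (((d - 1 : ℕ) : F) * (θ 0 - θ d))) ∧
      (Odd i →
        θ i = θ 0 - ((2 * d - i - 1 : ℕ) : F) * (θ 0 - θ d) / ((d - 1 : ℕ) : F)
            + ((d - i : ℕ) : F) * (ϕ 1 - φ d) / (((d - 1 : ℕ) : F) * (θs 0 - θs d)) ∧
        θs i = θs 0 - ((2 * d - i - 1 : ℕ) : F) * (θs 0 - θs d) / ((d - 1 : ℕ) : F)
            + ((d - i : ℕ) : F) * (ϕ d - φ d) / (((d - 1 : ℕ) : F) * (θ 0 - θ d)))) := by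
  obtain ⟨hθne, hθsne, hφ0, hϕ0, hiii, hiv, hv⟩ := hp
  obtain ⟨m, hm⟩ := hdodd
  have hm1 : 1 ≤ m := by omega
  -- recurrences from condition (v) with β = -2
  have hrecθ : ∀ i, i + 3 ≤ d → θ (i+3) = θ i + θ (i+1) - θ (i+2) := by
    intro i h
    have hne : θ (i+1) - θ (i+2) ≠ 0 :=
      sub_ne_zero.2 (hθne (i+1) (i+2) (by omega) (by omega))
    have hv' := (hv (i+2) (by omega) (by omega)).1
    simp only [show i+2-2 = i by omega, show i+2-1 = i+1 by omega,
      show i+2+1 = i+3 by omega, hβ] at hv'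
    rw [div_eq_iff hne] at hv'
    linear_combination -hv'
  have hrecθs : ∀ i, i + 3 ≤ d → θs (i+3) = θs i + θs (i+1) - θs (i+2) := by
    intro i h
    have hne : θs (i+1) - θs (i+2) ≠ 0 :=
      sub_ne_zero.2 (hθsne (i+1) (i+2) (by omega) (by omega))
    have hv' := (hv (i+2) (by omega) (by omega)).2
    simp only [show i+2-2 = i by omega, show i+2-1 = i+1 by omega,
      show i+2+1 = i+3 by omega, hβ] at hv'
    rw [div_eq_iff hne] at hv'
    linear_combination -hv'
  have heθ : ∀ k, 2*k ≤ d → θ (2*k) = θ 0 + (k:F) * (θ 2 - θ 0) :=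
    fun k => (parity_step hrecθ k).1
  have hoθ : ∀ k, 2*k+1 ≤ d → θ (2*k+1) = θ 1 - (k:F) * (θ 2 - θ 0) :=
    fun k => (parity_step hrecθ k).2.1
  have heθs : ∀ k, 2*k ≤ d → θs (2*k) = θs 0 + (k:F) * (θs 2 - θs 0) :=
    fun k => (parity_step hrecθs k).1
  have hoθs : ∀ k, 2*k+1 ≤ d → θs (2*k+1) = θs 1 - (k:F) * (θs 2 - θs 0) :=
    fun k => (parity_step hrecθs k).2.1
  have hc : θ 0 - θ d ≠ 0 := sub_ne_zero.2 (hθne 0 d (by omega) le_rfl)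
  have hcs : θs 0 - θs d ≠ 0 := sub_ne_zero.2 (hθsne 0 d (by omega) le_rfl)
  have h2 : (2:F) ≠ 0 := Ring.two_ne_zero hchar
  have hM : (m:F) ≠ 0 := by
    intro h0
    have h1 := heθ m (by omega)
    rw [h0] at h1
    exact hθne 0 (2*m) (by omega) (by omega) (by rw [h1]; ring)
  have hd1 : ((d-1:ℕ):F) = 2*(m:F) := by
    rw [show d-1 = 2*m by omega]; push_cast; ring
  have hd1ne : ((d-1:ℕ):F) ≠ 0 := by rw [hd1]; exact mul_ne_zero h2 hM
  have hθd_eq : θ d = θ 1 - (m:F) * (θ 2 - θ 0) := by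
    have := hoθ m (by omega); rwa [show 2*m+1 = d by omega] at this
  have hθsd_eq : θs d = θs 1 - (m:F) * (θs 2 - θs 0) := by
    have := hoθs m (by omega); rwa [show 2*m+1 = d by omega] at this
  have hθdm1 : θ (d-1) = θ 0 + (m:F) * (θ 2 - θ 0) := by
    have := heθ m (by omega); rwa [show 2*m = d-1 by omega] at this
  have hc2 : θ 0 - (θ 1 - (m:F) * (θ 2 - θ 0)) ≠ 0 := by rw [← hθd_eq]; exact hc
  have hcs2 : θs 0 - (θs 1 - (m:F) * (θs 2 - θs 0)) ≠ 0 := by rw [← hθsd_eq]; exact hcs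
  -- the alternating sum
  have hterm : ∀ l, l < d → (θ l - θ (d - l)) / (θ 0 - θ d) = (-1:F)^l := by
    intro l hl
    rcases Nat.even_or_odd l with ⟨k, hk⟩ | ⟨k, hk⟩
    · subst hk
      have hkm : k ≤ m := by omega
      have hθl : θ (k+k) = θ 0 + (k:F) * (θ 2 - θ 0) := by
        have := heθ k (by omega); rwa [show 2*k = k+k by ring] at this
      have hθdl : θ (d - (k+k)) = θ 1 - ((m:F) - (k:F)) * (θ 2 - θ 0) := by
        have := hoθ (m-k) (by omega)
        rw [show 2*(m-k)+1 = d - (k+k) by omega] at this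
        rw [this, Nat.cast_sub hkm]
      rw [hθl, hθdl, hθd_eq]
      rw [show θ 0 + (k:F) * (θ 2 - θ 0) - (θ 1 - ((m:F) - (k:F)) * (θ 2 - θ 0))
          = θ 0 - (θ 1 - (m:F) * (θ 2 - θ 0)) by ring, div_self hc2]
      exact (Even.neg_one_pow ⟨k, rfl⟩).symm
    · subst hk
      have hkm : k ≤ m := by omega
      have hθl : θ (2*k+1) = θ 1 - (k:F) * (θ 2 - θ 0) := hoθ k (by omega)
      have hθdl : θ (d - (2*k+1)) = θ 0 + ((m:F) - (k:F)) * (θ 2 - θ 0) := by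
        have := heθ (m-k) (by omega)
        rw [show 2*(m-k) = d - (2*k+1) by omega] at this
        rw [this, Nat.cast_sub hkm]
      rw [hθl, hθdl, hθd_eq]
      rw [show θ 1 - (k:F) * (θ 2 - θ 0) - (θ 0 + ((m:F) - (k:F)) * (θ 2 - θ 0))
          = -(θ 0 - (θ 1 - (m:F) * (θ 2 - θ 0))) by ring, neg_div, div_self hc2]
      exact (Odd.neg_one_pow ⟨k, rfl⟩).symm
  have hSd : ∑ l ∈ Finset.range d, (θ l - θ (d - l)) / (θ 0 - θ d) = 1 := by
    rw [Finset.sum_congr rfl fun l hl => hterm l (Finset.mem_range.mp hl),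
      neg_one_geom_sum]
    simp [Nat.not_even_iff_odd.mpr ⟨m, hm⟩]
  -- the three key equations
  have E1 := hiii d (by omega) le_rfl
  rw [hSd, mul_one, hθdm1, hθd_eq, hθsd_eq] at E1
  have E2 := hiii 1 le_rfl (by omega)
  rw [Finset.sum_range_one] at E2
  norm_num at E2
  rw [div_self hc, mul_one, hθd_eq] at E2
  have E3 := hiv d (by omega) le_rfl
  rw [hSd, mul_one, show d - d + 1 = 1 by omega, hθsd_eq] at E3
  have key1 : ϕ 1 - φ d
      = (θs 0 - θs 1 + (m:F) * (θs 2 - θs 0)) * (θ 0 - θ 1 + 2*(m:F) * (θ 2 - θ 0)) := by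
    linear_combination -E1
  have key2 : ϕ d - φ d
      = (θ 0 - θ 1 + (m:F) * (θ 2 - θ 0)) * (θs 0 - θs 1 + 2*(m:F) * (θs 2 - θs 0)) := by
    linear_combination E3 - E1 + E2
  refine ⟨hd1ne, fun i hi => ⟨?_, ?_⟩⟩
  · rintro ⟨k, rfl⟩
    have hθi : θ (k+k) = θ 0 + (k:F) * (θ 2 - θ 0) := by
      have := heθ k (by omega); rwa [show 2*k = k+k by ring] at this
    have hθsi : θs (k+k) = θs 0 + (k:F) * (θs 2 - θs 0) := by
      have := heθs k (by omega); rwa [show 2*k = k+k by ring] at this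
    constructor
    · rw [hθi, hd1, hθd_eq, hθsd_eq, key1]
      push_cast
      field_simp
      ring
    · rw [hθsi, hd1, hθd_eq, hθsd_eq, key2]
      push_cast
      field_simp
      ring
  · rintro ⟨k, rfl⟩
    have hθi : θ (2*k+1) = θ 1 - (k:F) * (θ 2 - θ 0) := hoθ k (by omega)
    have hθsi : θs (2*k+1) = θs 1 - (k:F) * (θs 2 - θs 0) := hoθs k (by omega)
    rw [show 2*d - (2*k+1) - 1 = 4*m - 2*k by omega, show d - (2*k+1) = 2*m - 2*k by omega,
      Nat.cast_sub (show 2*k ≤ 4*m by omega), Nat.cast_sub (show 2*k ≤ 2*m by omega)]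
    constructor
    · rw [hθi, hd1, hθd_eq, hθsd_eq, key1]
      push_cast
      field_simp
      ring
    · rw [hθsi, hd1, hθd_eq, hθsd_eq, key2]
      push_cast
      field_simp
      ring
end

section
/- Let p be a parameter array over F of diameter d = 3 with fundamental parameter β, and suppose β = 0 and Char(F) = 2 (type IV). Then θ_1 = θ_0 + (ϕ_1 - φ_3)/(θ*_0 - θ*_3), θ_2 = θ_3 + (ϕ_1 - φ_3)/(θ*_0 - θ*_3), θ*_1 = θ*_0 + (ϕ_3 - φ_3)/(θ_0 - θ_3), and θ*_2 = θ*_3 + (ϕ_3 - φ_3)/(θ_0 - θ_3). -/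
open Finset

/-- Type IV eigenvalue formulas: `d = 3`, `β = 0`, `Char(F) = 2`. -/
theorem theta_formulas_typeIV
    {F : Type*} [Field F] [IsAlgClosed F]
    (θ θs φ ϕ : ℕ → F) (β : F)
    (hp : IsParameterArray 3 θ θs φ ϕ β)
    (hβ : β = 0) (hchar : ringChar F = 2) :
    θ 1 = θ 0 + (ϕ 1 - φ 3) / (θs 0 - θs 3) ∧
    θ 2 = θ 3 + (ϕ 1 - φ 3) / (θs 0 - θs 3) ∧
    θs 1 = θs 0 + (ϕ 3 - φ 3) / (θ 0 - θ 3) ∧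
    θs 2 = θs 3 + (ϕ 3 - φ 3) / (θ 0 - θ 3) := by
  obtain ⟨hθ, hθs, hφ, hϕ, hiii, hiv, hv⟩ := hp
  have h03 : θ 0 - θ 3 ≠ 0 := sub_ne_zero.mpr (hθ 0 3 (by norm_num) le_rfl)
  have hs03 : θs 0 - θs 3 ≠ 0 := sub_ne_zero.mpr (hθs 0 3 (by norm_num) le_rfl)
  have h12 : θ 1 - θ 2 ≠ 0 := sub_ne_zero.mpr (hθ 1 2 (by norm_num) (by norm_num))
  have hs12 : θs 1 - θs 2 ≠ 0 := sub_ne_zero.mpr (hθs 1 2 (by norm_num) (by norm_num))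
  obtain ⟨hv2a, hv2b⟩ := hv 2 le_rfl (by norm_num)
  rw [hβ] at hv2a hv2b
  norm_num at hv2a hv2b
  rw [div_eq_one_iff_eq h12] at hv2a
  rw [div_eq_one_iff_eq hs12] at hv2b
  have hS : ∑ l ∈ Finset.range 3, (θ l - θ (3 - l)) / (θ 0 - θ 3) = 1 := by
    rw [Finset.sum_range_succ, Finset.sum_range_succ, Finset.sum_range_one]
    norm_num
    field_simp
    ring
  have e1 := hiv 1 le_rfl (by norm_num)
  have e2 := hiii 3 (by norm_num) le_rfl
  have e3 := hiv 3 (by norm_num) le_rfl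
  rw [hS] at e2 e3
  norm_num at e1 e2 e3
  rw [div_self h03] at e1
  refine ⟨?_, ?_, ?_, ?_⟩
  · field_simp
    linear_combination e2 - (θs 0 - θs 3) * hv2a
  · field_simp
    linear_combination e2
  · field_simp
    linear_combination -e3 + e2 + e1 + (θs 3 - θs 0) * hv2a
  · field_simp
    linear_combination -e3 + e2 + e1 + (θs 3 - θs 0) * hv2a + (θ 0 - θ 3) * hv2b
end

section
/- The following hold. (a) If d is even, d·1_F ≠ 0 in F, and ω = 2/d, then the set {x ∈ F : f_ω(x) = 0, x ≠ 1, x ≠ -1} has at most d-4 elements. (b) If d is odd, d·1_F ≠ 0 in F, and ω = 2/d, then this set has at most d-3 elements. (c) If d is even, d·1_F ≠ 0 in F, and ω = 2(d-1)/d, then this set has at most d-4 elements. (d) If d is odd and ω = 2, then this set has at most d-3 elements. -/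
open Polynomial

/-- The polynomial `f_ω(x) = ω(x^d - 1) - (x - 1)(x^{d-1} + 1)` in `F[x]`. -/
noncomputable def fpoly {F : Type*} [Field F] (d : ℕ) (ω : F) : Polynomial F :=
  C ω * (X ^ d - 1) - (X - 1) * (X ^ (d - 1) + 1)

lemma lemA (R : Type*) [CommRing R] (n : ℕ) :
    (X - 1 : R[X]) ^ 2 ∣ X ^ n - 1 - (n : R[X]) * (X - 1) := by
  have h1 : (X ^ n - 1 : R[X]) = (∑ i ∈ Finset.range n, X ^ i) * (X - 1) :=
    (geom_sum_mul X n).symm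
  have h2 : (X - 1 : R[X]) ∣ (∑ i ∈ Finset.range n, X ^ i) - (n : R[X]) := by
    have : ((∑ i ∈ Finset.range n, X ^ i) - (n : R[X]))
        = ∑ i ∈ Finset.range n, (X ^ i - 1) := by
      rw [Finset.sum_sub_distrib]
      simp [Finset.sum_const, Finset.card_range]
    rw [this]
    refine Finset.dvd_sum fun i _ => ?_
    simpa using sub_dvd_pow_sub_pow (X : R[X]) 1 i
  have : X ^ n - 1 - (n : R[X]) * (X - 1)
      = ((∑ i ∈ Finset.range n, X ^ i) - (n : R[X])) * (X - 1) := by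
    rw [h1]; ring
  rw [this, pow_two]
  exact mul_dvd_mul h2 dvd_rfl

lemma lemB (R : Type*) [CommRing R] (n : ℕ) :
    (X - 1 : R[X]) ^ 3 ∣ 2 * (X ^ (n + 1) - 1) - ((n : R[X]) + 1) * (X - 1) * (X ^ n + 1) := by
  induction n with
  | zero =>
    have : (2 * (X ^ 1 - 1) - ((0 : ℕ) + 1 : R[X]) * (X - 1) * (X ^ 0 + 1) : R[X]) = 0 := by
      push_cast; ring
    rw [this]; exact dvd_zero _
  | succ n ih =>
    have key := lemA R (n + 1)
    have hrec : (2 * (X ^ (n + 1 + 1) - 1) - ((n + 1 : ℕ) + 1 : R[X]) * (X - 1) * (X ^ (n + 1) + 1) : R[X])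
        = X * (2 * (X ^ (n + 1) - 1) - ((n : R[X]) + 1) * (X - 1) * (X ^ n + 1))
          - (X - 1) * (X ^ (n + 1) - 1 - ((n + 1 : ℕ) : R[X]) * (X - 1)) := by
      push_cast; ring
    rw [hrec]
    refine dvd_sub (ih.mul_left X) ?_
    have : ((X:R[X]) - 1) ^ 3 = (X - 1) * (X - 1) ^ 2 := by ring
    rw [this]
    exact mul_dvd_mul_left _ key

lemma lemA2 (R : Type*) [CommRing R] (m : ℕ) :
    (X + 1 : R[X]) ^ 2 ∣ 2 * X * (X ^ (2 * m) - 1) + ((2 * m : ℕ) : R[X]) * (X ^ 2 - 1) := by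
  induction m with
  | zero => simp
  | succ m ih =>
    have hrec : (2 * X * (X ^ (2 * (m + 1)) - 1) + ((2 * (m + 1) : ℕ) : R[X]) * (X ^ 2 - 1) : R[X])
        = X ^ 2 * (2 * X * (X ^ (2 * m) - 1) + ((2 * m : ℕ) : R[X]) * (X ^ 2 - 1))
          + (X + 1) ^ 2 * (-(((2 * m : ℕ) : R[X])) * X ^ 2 + ((4 * m + 2 : ℕ) : R[X]) * X
              - ((2 * m + 2 : ℕ) : R[X])) := by
      push_cast; ring
    rw [hrec]
    exact dvd_add (ih.mul_left _) (Dvd.intro _ rfl)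

lemma lemC (R : Type*) [CommRing R] (m : ℕ) :
    (X + 1 : R[X]) ^ 3 ∣ 2 * ((2 * m + 1 : ℕ) : R[X]) * (X ^ (2 * m + 2) - 1)
      - ((2 * m + 2 : ℕ) : R[X]) * (X - 1) * (X ^ (2 * m + 1) + 1) := by
  induction m with
  | zero =>
    have : (2 * ((2 * 0 + 1 : ℕ) : R[X]) * (X ^ (2 * 0 + 2) - 1)
        - ((2 * 0 + 2 : ℕ) : R[X]) * (X - 1) * (X ^ (2 * 0 + 1) + 1) : R[X]) = 0 := by
      push_cast; ring
    rw [this]; exact dvd_zero _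
  | succ m ih =>
    have key := lemA2 R (m + 1)
    have hrec : (2 * ((2 * (m + 1) + 1 : ℕ) : R[X]) * (X ^ (2 * (m + 1) + 2) - 1)
        - ((2 * (m + 1) + 2 : ℕ) : R[X]) * (X - 1) * (X ^ (2 * (m + 1) + 1) + 1) : R[X])
        = X ^ 2 * (2 * ((2 * m + 1 : ℕ) : R[X]) * (X ^ (2 * m + 2) - 1)
            - ((2 * m + 2 : ℕ) : R[X]) * (X - 1) * (X ^ (2 * m + 1) + 1))
          + (X + 1) * (2 * X * (X ^ (2 * (m + 1)) - 1) + ((2 * (m + 1) : ℕ) : R[X]) * (X ^ 2 - 1)) := by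
      push_cast; ring
    rw [hrec]
    refine dvd_add (ih.mul_left _) ?_
    have : ((X:R[X]) + 1) ^ 3 = (X + 1) * (X + 1) ^ 2 := by ring
    rw [this]
    exact mul_dvd_mul_left _ key

lemma lemD (R : Type*) [CommRing R] (m : ℕ) :
    (X - 1 : R[X]) * (X + 1) ^ 2 ∣ 2 * (X ^ (2 * m + 1) - 1) - (X - 1) * (X ^ (2 * m) + 1) := by
  induction m with
  | zero =>
    have : (2 * (X ^ (2 * 0 + 1) - 1) - (X - 1) * (X ^ (2 * 0) + 1) : R[X]) = 0 := by ring
    rw [this]; exact dvd_zero _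
  | succ m ih =>
    have hrec : (2 * (X ^ (2 * (m + 1) + 1) - 1) - (X - 1) * (X ^ (2 * (m + 1)) + 1) : R[X])
        = X ^ 2 * (2 * (X ^ (2 * m + 1) - 1) - (X - 1) * (X ^ (2 * m) + 1))
          + (X - 1) * (X + 1) ^ 2 := by ring
    rw [hrec]
    exact dvd_add (ih.mul_left _) (Dvd.intro 1 (mul_one _))

lemma count_aux {F : Type*} [Field F] {p : F[X]} {a b n : ℕ} (hp : p ≠ 0)
    (hdvd : (X - 1) ^ a * (X + 1) ^ b ∣ p) (hdeg : p.natDegree ≤ n) :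
    {x : F | p.eval x = 0 ∧ x ≠ 1 ∧ x ≠ -1}.encard ≤ ((n - (a + b) : ℕ) : ℕ∞) := by
  classical
  obtain ⟨r, hr⟩ := hdvd
  have hr0 : r ≠ 0 := by rintro rfl; simp [hr] at hp
  have hq0 : ((X - 1 : F[X]) ^ a * (X + 1) ^ b) ≠ 0 := by
    apply mul_ne_zero <;> apply pow_ne_zero <;> [exact X_sub_C_ne_zero 1; skip]
    · simpa using X_sub_C_ne_zero (-1 : F)
  have hsub : {x : F | p.eval x = 0 ∧ x ≠ 1 ∧ x ≠ -1} ⊆ ↑r.roots.toFinset := by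
    rintro x ⟨hx, h1, h2⟩
    rw [hr] at hx
    simp only [eval_mul, eval_pow, eval_sub, eval_add, eval_X, eval_one, mul_eq_zero,
      pow_eq_zero_iff', sub_eq_zero, add_eq_zero_iff_eq_neg] at hx
    have hx' : r.eval x = 0 := by
      rcases hx with (h | h) | h
      · exact absurd h.1 h1
      · exact absurd h.1 h2
      · exact h
    rw [Finset.mem_coe, Multiset.mem_toFinset, mem_roots hr0]
    exact hx'
  have hnd : r.natDegree ≤ n - (a + b) := by
    have h1 : p.natDegree = (a + b) + r.natDegree := by
      rw [hr, natDegree_mul hq0 hr0, natDegree_mul (pow_ne_zero _ (by simpa using X_sub_C_ne_zero (1:F))) (pow_ne_zero _ (by simpa using X_sub_C_ne_zero (-1:F)))]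
      have e1 : ((X:F[X]) - 1).natDegree = 1 := by simpa using natDegree_X_sub_C (1 : F)
      have e2 : ((X:F[X]) + 1).natDegree = 1 := by simpa using natDegree_X_sub_C (-1 : F)
      rw [natDegree_pow, natDegree_pow, e1, e2]; ring
    omega
  calc {x : F | p.eval x = 0 ∧ x ≠ 1 ∧ x ≠ -1}.encard
      ≤ (↑r.roots.toFinset : Set F).encard := Set.encard_mono hsub
    _ = (r.roots.toFinset.card : ℕ∞) := Set.encard_coe_eq_coe_finsetCard _
    _ ≤ ((n - (a + b) : ℕ) : ℕ∞) := by
        have : r.roots.toFinset.card ≤ n - (a + b) :=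
          le_trans (Multiset.toFinset_card_le _) (le_trans (card_roots' r) hnd)
        exact_mod_cast this

lemma fpoly_ne_zero {F : Type*} [Field F] (k : ℕ) (ω : F) : fpoly (k + 3) ω ≠ 0 := by
  have hc : (fpoly (k + 3) ω).coeff (k + 2) = 1 := by
    have h : fpoly (k + 3) ω
        = C ω * X ^ (k + 3) - C ω - X ^ (k + 3) - X + X ^ (k + 2) + 1 := by
      simp only [fpoly, show k + 3 - 1 = k + 2 from rfl]
      ring
    rw [h]
    simp only [coeff_add, coeff_sub, coeff_C_mul, coeff_X_pow, coeff_X, coeff_one, coeff_C]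
    have h1 : ¬ (k + 2 = k + 3) := by omega
    have h2 : ¬ (k + 2 = 0) := by omega
    have h3 : ¬ ((1:ℕ) = k + 2) := by omega
    simp [h1, h2, h3]
  intro h
  rw [h] at hc
  simp at hc

lemma fpoly_ne_zero' {F : Type*} [Field F] {d : ℕ} (hd : 3 ≤ d) (ω : F) : fpoly d ω ≠ 0 := by
  obtain ⟨k, rfl⟩ : ∃ k, d = k + 3 := ⟨d - 3, by omega⟩
  exact fpoly_ne_zero k ω

lemma fpoly_natDegree_le {F : Type*} [Field F] (d : ℕ) (hd : 1 ≤ d) (ω : F) :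
    (fpoly d ω).natDegree ≤ d := by
  unfold fpoly
  refine le_trans (natDegree_sub_le _ _) (max_le ?_ ?_)
  · refine le_trans (natDegree_C_mul_le _ _) (le_trans (natDegree_sub_le _ _) ?_)
    simp
  · refine le_trans (natDegree_mul_le) ?_
    have h1 : ((X:F[X]) - 1).natDegree ≤ 1 := by
      simpa using (natDegree_X_sub_C (1:F)).le
    have h2 : ((X:F[X]) ^ (d-1) + 1).natDegree ≤ d - 1 := by
      refine le_trans (natDegree_add_le _ _) ?_
      simp
    omega

lemma coprime_base {F : Type*} [Field F] (h2 : (2:F) ≠ 0) :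
    IsCoprime (X - 1 : F[X]) (X + 1) := by
  refine ⟨-C (2⁻¹:F), C (2⁻¹:F), ?_⟩
  have h : (-C (2⁻¹:F)) * (X - 1) + C (2⁻¹:F) * (X + 1) = C (2⁻¹:F) * 2 := by ring
  rw [h, show (2:F[X]) = C (2:F) from by norm_num [map_ofNat], ← C_mul,
    inv_mul_cancel₀ h2, C_1]

lemma dvd_of_C_mul_dvd {F : Type*} [Field F] {c : F} (hc : c ≠ 0) {q p : F[X]}
    (h : q ∣ C c * p) : q ∣ p := by
  have : p = C c⁻¹ * (C c * p) := by
    rw [← mul_assoc, ← C_mul, inv_mul_cancel₀ hc, C_1, one_mul]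
  rw [this]
  exact h.mul_left _

lemma neg_one_root_even {F : Type*} [Field F] {d : ℕ} (hd : 3 ≤ d) (hEven : Even d) (ω : F) :
    (X + 1 : F[X]) ∣ fpoly d ω := by
  have h : (X + 1 : F[X]) = X - C (-1) := by simp
  rw [h, dvd_iff_isRoot]
  have hodd : Odd (d - 1) := Nat.Even.sub_odd (by omega) hEven odd_one
  simp only [IsRoot, fpoly, eval_sub, eval_mul, eval_add, eval_pow, eval_C, eval_X, eval_one]
  rw [hEven.neg_one_pow, hodd.neg_one_pow]
  ring

lemma one_root {F : Type*} [Field F] (d : ℕ) (ω : F) :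
    (X - 1 : F[X]) ∣ fpoly d ω := by
  have h : (X - 1 : F[X]) = X - C 1 := by simp
  rw [h, dvd_iff_isRoot]
  simp [IsRoot, fpoly]

/-- Bounds on the number of roots of `f_ω(x) = 0` other than `±1` for the special
values `ω = 2/d`, `ω = 2(d-1)/d`, `ω = 2`. -/
theorem fpoly_roots_special_omega
    {F : Type*} [Field F] [IsAlgClosed F] (d : ℕ) (hd : 3 ≤ d) (ω : F) :
    (Even d → (d : F) ≠ 0 → ω = 2 / (d : F) →
      {x : F | (fpoly d ω).eval x = 0 ∧ x ≠ 1 ∧ x ≠ -1}.encard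
        ≤ ((d - 4 : ℕ) : ℕ∞)) ∧
    (Odd d → (d : F) ≠ 0 → ω = 2 / (d : F) →
      {x : F | (fpoly d ω).eval x = 0 ∧ x ≠ 1 ∧ x ≠ -1}.encard
        ≤ ((d - 3 : ℕ) : ℕ∞)) ∧
    (Even d → (d : F) ≠ 0 → ω = 2 * ((d - 1 : ℕ) : F) / (d : F) →
      {x : F | (fpoly d ω).eval x = 0 ∧ x ≠ 1 ∧ x ≠ -1}.encard
        ≤ ((d - 4 : ℕ) : ℕ∞)) ∧
    (Odd d → ω = 2 →
      {x : F | (fpoly d ω).eval x = 0 ∧ x ≠ 1 ∧ x ≠ -1}.encard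
        ≤ ((d - 3 : ℕ) : ℕ∞)) := by
  have hne : fpoly d ω ≠ 0 := fpoly_ne_zero' hd ω
  have hdeg : (fpoly d ω).natDegree ≤ d := fpoly_natDegree_le d (by omega) ω
  -- (X-1)^3 divides fpoly when ω = 2/d
  have cube_dvd : (d : F) ≠ 0 → ω = 2 / (d : F) → (X - 1 : F[X]) ^ 3 ∣ fpoly d ω := by
    intro hd0 hω
    obtain ⟨k, rfl⟩ : ∃ k, d = k + 3 := ⟨d - 3, by omega⟩
    have key : C (((k+3:ℕ)):F) * fpoly (k+3) ω
        = 2 * (X ^ (k+3) - 1) - (((k+2:ℕ) : F[X]) + 1) * (X - 1) * (X ^ (k+2) + 1) := by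
      rw [hω]
      unfold fpoly
      rw [show (k+3) - 1 = k+2 from rfl]
      have h1 : (C (((k + 3:ℕ)):F)) * C (2 / ((k + 3:ℕ):F)) = 2 := by
        have hd0' : ((k:F)+3) ≠ 0 := by push_cast at hd0; exact hd0
        rw [← C_mul, show ((k+3:ℕ):F) * (2 / ((k+3:ℕ):F)) = 2 by push_cast; field_simp]
        simp [map_ofNat]
      have h2 : (C (((k+3:ℕ)):F)) = ((k+2 : ℕ) : F[X]) + 1 := by
        rw [C_eq_natCast]; push_cast; ring
      linear_combination (X^(k+3) - 1 : F[X]) * h1 - ((X-1)*(X^(k+2)+1)) * h2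
    have hB : (X - 1 : F[X]) ^ 3 ∣ C (((k+3:ℕ)):F) * fpoly (k+3) ω := by
      rw [key]
      exact lemB F (k + 2)
    exact dvd_of_C_mul_dvd hd0 hB
  refine ⟨?_, ?_, ?_, ?_⟩
  · -- case (a)
    intro hEven hd0 hω
    have h2F : (2:F) ≠ 0 := by
      intro h2
      obtain ⟨m, hm⟩ := hEven
      exact hd0 (by rw [hm]; push_cast; rw [show (m:F) + m = 2 * m by ring, h2, zero_mul])
    have hdvd : (X - 1 : F[X]) ^ 3 * (X + 1) ^ 1 ∣ fpoly d ω := by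
      refine ((coprime_base h2F).pow (m := 3) (n := 1)).mul_dvd (cube_dvd hd0 hω) ?_
      rw [pow_one]
      exact neg_one_root_even hd hEven ω
    have := count_aux hne hdvd hdeg
    convert this using 2
  · -- case (b)
    intro _ hd0 hω
    have hdvd : (X - 1 : F[X]) ^ 3 * (X + 1) ^ 0 ∣ fpoly d ω := by
      rw [pow_zero, mul_one]
      exact cube_dvd hd0 hω
    have := count_aux hne hdvd hdeg
    convert this using 2
  · -- case (c)
    intro hEven hd0 hω
    have h2F : (2:F) ≠ 0 := by
      intro h2
      obtain ⟨m, hm⟩ := hEven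
      exact hd0 (by rw [hm]; push_cast; rw [show (m:F) + m = 2 * m by ring, h2, zero_mul])
    obtain ⟨m', hm'⟩ := hEven
    obtain ⟨m, rfl⟩ : ∃ m, d = 2*m+2 := ⟨m' - 1, by omega⟩
    have key : C (((2*m+2:ℕ)):F) * fpoly (2*m+2) ω
        = 2 * ((2*m+1 : ℕ) : F[X]) * (X ^ (2*m+2) - 1)
          - ((2*m+2 : ℕ) : F[X]) * (X - 1) * (X ^ (2*m+1) + 1) := by
      rw [hω]
      unfold fpoly
      rw [show 2*m+2 - 1 = 2*m+1 from rfl]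
      have h1 : (C (((2*m+2:ℕ)):F)) * C (2 * ((2*m+1:ℕ):F) / ((2*m+2:ℕ):F))
          = 2 * ((2*m+1 : ℕ) : F[X]) := by
        rw [← C_mul, show ((2*m+2:ℕ):F) * (2 * ((2*m+1:ℕ):F) / ((2*m+2:ℕ):F))
          = 2 * ((2*m+1:ℕ):F) by push_cast at hd0 ⊢; rw [mul_comm]; exact div_mul_cancel₀ _ hd0]
        push_cast
        simp [map_ofNat]
      have h2 : (C (((2*m+2:ℕ)):F)) = ((2*m+2 : ℕ) : F[X]) := by rw [C_eq_natCast]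
      linear_combination (X^(2*m+2) - 1 : F[X]) * h1 - ((X-1)*(X^(2*m+1)+1)) * h2
    have hC : (X + 1 : F[X]) ^ 3 ∣ C (((2*m+2:ℕ)):F) * fpoly (2*m+2) ω := by
      rw [key]; exact lemC F m
    have hdvd : (X - 1 : F[X]) ^ 1 * (X + 1) ^ 3 ∣ fpoly (2*m+2) ω := by
      refine ((coprime_base h2F).pow (m := 1) (n := 3)).mul_dvd ?_ (dvd_of_C_mul_dvd hd0 hC)
      rw [pow_one]
      exact one_root _ ω
    have := count_aux hne hdvd hdeg
    convert this using 2
  · -- case (d)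
    intro hOdd hω
    obtain ⟨m, rfl⟩ : ∃ m, d = 2*m+1 := hOdd
    have key : fpoly (2*m+1) ω = 2 * (X ^ (2*m+1) - 1) - (X - 1) * (X ^ (2*m) + 1) := by
      rw [hω]
      unfold fpoly
      rw [show 2*m+1 - 1 = 2*m from rfl]
      simp [map_ofNat]
    have hdvd : (X - 1 : F[X]) ^ 1 * (X + 1) ^ 2 ∣ fpoly (2*m+1) ω := by
      rw [pow_one, key]
      exact lemD F m
    have := count_aux hne hdvd hdeg
    convert this using 2
end

section
/- Assume d·1_F ≠ 0 in F. Then the set of ω ∈ F such that the equation f_ω(x) = 0 has a repeated root (that is, there exists q ∈ F with f_ω(q) = 0 and f_ω'(q) = 0, where f_ω' is the formal derivative of f_ω) has at most d elements. -/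
open Polynomial

section Aux

noncomputable def useq (F : Type*) [Field F] : ℕ → Polynomial F
  | 0 => 0
  | 1 => 1
  | (n+2) => X * useq F (n+1) - useq F n

variable {F : Type*} [Field F]


lemma useq_monic_deg : ∀ n : ℕ, (useq F (n+1)).Monic ∧ (useq F (n+1)).degree = (n : WithBot ℕ) := by
  intro n
  induction n using Nat.strong_induction_on with
  | _ n ih =>
    match n with
    | 0 => exact ⟨monic_one, by simp [useq]⟩
    | 1 =>
      refine ⟨?_, ?_⟩
      · show (X * useq F 1 - useq F 0).Monic
        simp [useq, monic_X]
      · show (X * useq F 1 - useq F 0).degree = (1 : WithBot ℕ)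
        simp [useq]
    | (m+2) =>
      obtain ⟨h1m, h1d⟩ := ih (m+1) (by omega)
      obtain ⟨h0m, h0d⟩ := ih m (by omega)
      have hXm : (X * useq F (m+2)).Monic := (monic_X.mul h1m)
      have hXd : (X * useq F (m+2)).degree = ((m+2 : ℕ) : WithBot ℕ) := by
        rw [degree_mul, degree_X, h1d]
        push_cast; ring
      have hlt : (useq F (m+1)).degree < (X * useq F (m+2)).degree := by
        rw [hXd, h0d]
        exact_mod_cast Nat.lt_succ_of_lt (Nat.lt_succ_self m)
      refine ⟨?_, ?_⟩
      · show (X * useq F (m+2) - useq F (m+1)).Monic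
        exact hXm.sub_of_left hlt
      · show (X * useq F (m+2) - useq F (m+1)).degree = ((m+2 : ℕ) : WithBot ℕ)
        rw [← hXd]
        exact degree_sub_eq_left_of_degree_lt hlt

lemma useq_eval (n : ℕ) (q : F) (hq : q ≠ 0) :
    (useq F n).eval (q + q⁻¹) * (q - q⁻¹) = q ^ n - (q⁻¹) ^ n := by
  induction n using Nat.strong_induction_on with
  | _ n ih =>
    match n with
    | 0 => simp [useq]
    | 1 => simp [useq]
    | (m+2) =>
      have h1 := ih (m+1) (by omega)
      have h0 := ih m (by omega)
      show ((X * useq F (m+1) - useq F m).eval (q + q⁻¹)) * (q - q⁻¹) = _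
      have hqi : q * q⁻¹ = 1 := mul_inv_cancel₀ hq
      simp only [eval_sub, eval_mul, eval_X]
      have key : ((q + q⁻¹) * (useq F (m+1)).eval (q + q⁻¹) - (useq F m).eval (q + q⁻¹)) * (q - q⁻¹)
          = (q + q⁻¹) * ((useq F (m+1)).eval (q + q⁻¹) * (q - q⁻¹)) - ((useq F m).eval (q + q⁻¹) * (q - q⁻¹)) := by ring
      rw [key, h1, h0]
      linear_combination (q^m - (q⁻¹)^m) * hqi

lemma eval_fpoly (n : ℕ) (ω q : F) :
    (fpoly (n+2) ω).eval q = ω * (q^n * q^2 - 1) - (q - 1) * (q^n * q + 1) := by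
  simp [fpoly]
  ring

lemma eval_dfpoly (n : ℕ) (ω q : F) :
    ((fpoly (n+2) ω).derivative).eval q =
      ω * (((n:F)+2) * (q^n * q)) - ((q^n * q + 1) + (q - 1) * (((n:F)+1) * q^n)) := by
  simp [fpoly]
  ring


-- abbreviations for the two eval equations
lemma grel (n : ℕ) (ω q : F)
    (h1 : ω * (q^n * q^2 - 1) - (q - 1) * (q^n * q + 1) = 0)
    (h2 : ω * (((n:F)+2) * (q^n * q)) - ((q^n * q + 1) + (q - 1) * (((n:F)+1) * q^n)) = 0) :
    (q^n)^2 * q^2 - ((n:F)+1) * (q^n * q^2) + ((n:F)+1) * q^n - 1 = 0 := by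
  linear_combination (((n:F)+2) * (q^n * q)) * h1 - (q^n * q^2 - 1) * h2

lemma q_ne_zero (n : ℕ) (hn : 1 ≤ n) (ω q : F)
    (h2 : ω * (((n:F)+2) * (q^n * q)) - ((q^n * q + 1) + (q - 1) * (((n:F)+1) * q^n)) = 0) :
    q ≠ 0 := by
  rintro rfl
  rw [zero_pow (by omega : n ≠ 0)] at h2
  simp at h2

lemma uniq (n : ℕ) (hdF : ((n:F)+2) ≠ 0) (ω ω' q : F)
    (h1 : ω * (q^n * q^2 - 1) - (q - 1) * (q^n * q + 1) = 0)
    (h2 : ω * (((n:F)+2) * (q^n * q)) - ((q^n * q + 1) + (q - 1) * (((n:F)+1) * q^n)) = 0)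
    (h1' : ω' * (q^n * q^2 - 1) - (q - 1) * (q^n * q + 1) = 0)
    (h2' : ω' * (((n:F)+2) * (q^n * q)) - ((q^n * q + 1) + (q - 1) * (((n:F)+1) * q^n)) = 0) :
    ω = ω' := by
  by_contra hne
  have hA : (ω - ω') * (q^n * q^2 - 1) = 0 := by linear_combination h1 - h1'
  have hC : (ω - ω') * (((n:F)+2) * (q^n * q)) = 0 := by linear_combination h2 - h2'
  have hsub : ω - ω' ≠ 0 := sub_ne_zero_of_ne hne
  have hA' : q^n * q^2 - 1 = 0 := by
    rcases mul_eq_zero.mp hA with h | h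
    · exact absurd h hsub
    · exact h
  have hC' : ((n:F)+2) * (q^n * q) = 0 := by
    rcases mul_eq_zero.mp hC with h | h
    · exact absurd h hsub
    · exact h
  have hq : q^n * q = 0 := by
    rcases mul_eq_zero.mp hC' with h | h
    · exact absurd h hdF
    · exact h
  have : q^n * q^2 = 0 := by
    rcases mul_eq_zero.mp hq with h | h
    · rw [h]; ring
    · rw [h]; ring
  rw [this] at hA'
  simp at hA'

lemma recip1 (n : ℕ) (ω q : F) (hq : q ≠ 0)
    (h1 : ω * (q^n * q^2 - 1) - (q - 1) * (q^n * q + 1) = 0) :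
    ω * ((q⁻¹)^n * (q⁻¹)^2 - 1) - (q⁻¹ - 1) * ((q⁻¹)^n * q⁻¹ + 1) = 0 := by
  have hy : q^n ≠ 0 := pow_ne_zero n hq
  have key : (ω * ((q⁻¹)^n * (q⁻¹)^2 - 1) - (q⁻¹ - 1) * ((q⁻¹)^n * q⁻¹ + 1)) * (q^n * q^2)
      = -(ω * (q^n * q^2 - 1) - (q - 1) * (q^n * q + 1)) := by
    rw [inv_pow]
    field_simp
    ring
  rw [h1, neg_zero] at key
  rcases mul_eq_zero.mp key with h | h
  · exact h
  · exact absurd h (mul_ne_zero hy (pow_ne_zero 2 hq))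

lemma recip2 (n : ℕ) (ω q : F) (hq : q ≠ 0)
    (h1 : ω * (q^n * q^2 - 1) - (q - 1) * (q^n * q + 1) = 0)
    (h2 : ω * (((n:F)+2) * (q^n * q)) - ((q^n * q + 1) + (q - 1) * (((n:F)+1) * q^n)) = 0) :
    ω * (((n:F)+2) * ((q⁻¹)^n * q⁻¹)) - (((q⁻¹)^n * q⁻¹ + 1) + (q⁻¹ - 1) * (((n:F)+1) * (q⁻¹)^n)) = 0 := by
  have hy : q^n ≠ 0 := pow_ne_zero n hq
  have hf := recip1 n ω q hq h1
  -- identity: (f'(1/q) expr) * (q^n * q) = (f'(q) expr) + ((n:F)+2)*(q^n*q) * (f(1/q) expr) * (q^n*q) ... derive directly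
  have key : (ω * (((n:F)+2) * ((q⁻¹)^n * q⁻¹)) - (((q⁻¹)^n * q⁻¹ + 1) + (q⁻¹ - 1) * (((n:F)+1) * (q⁻¹)^n))) * (q^n)
      = (ω * (((n:F)+2) * (q^n * q)) - ((q^n * q + 1) + (q - 1) * (((n:F)+1) * q^n)))
        + (((n:F)+2) * (q^n * q)) * (ω * ((q⁻¹)^n * (q⁻¹)^2 - 1) - (q⁻¹ - 1) * ((q⁻¹)^n * q⁻¹ + 1)) := by
    rw [inv_pow]
    field_simp
    ring
  rw [h2, hf, mul_zero, add_zero] at key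
  rcases mul_eq_zero.mp key with h | h
  · exact h
  · exact absurd h hy

end Aux

/-- If `d·1_F ≠ 0`, then the equation `f_ω(x) = 0` has a repeated root for at most
`d` values of `ω`. -/
theorem fpoly_repeated_root_card
    {F : Type*} [Field F] [IsAlgClosed F] (d : ℕ) (hd : 3 ≤ d)
    (hdF : (d : F) ≠ 0) :
    {ω : F | ∃ q : F, (fpoly d ω).eval q = 0 ∧
      ((fpoly d ω).derivative).eval q = 0}.encard ≤ (d : ℕ∞) := by
  obtain ⟨n, rfl⟩ : ∃ n, d = n + 2 := ⟨d - 2, by omega⟩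
  have hn : 1 ≤ n := by omega
  have hnF : ((n:F)+2) ≠ 0 := by
    intro h; apply hdF; push_cast; linear_combination h
  set S := {ω : F | ∃ q : F, (fpoly (n+2) ω).eval q = 0 ∧
      ((fpoly (n+2) ω).derivative).eval q = 0} with hS
  set W : Polynomial F := (X^2 - C 4) * (useq F (n+1) - C ((n:F)+1)) with hW
  obtain ⟨hum, hud⟩ := useq_monic_deg (F := F) n
  have hm1 : (X^2 - C (4:F)).Monic := by
    apply (monic_X_pow 2).sub_of_left
    rw [degree_X_pow]
    exact lt_of_le_of_lt (degree_C_le) (by norm_num)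
  have hm2 : (useq F (n+1) - C ((n:F)+1)).Monic := by
    apply hum.sub_of_left
    rw [hud]
    exact lt_of_le_of_lt (degree_C_le) (by exact_mod_cast Nat.pos_of_ne_zero (by omega))
  have hWm : W.Monic := hm1.mul hm2
  have hWdeg : W.natDegree = n + 2 := by
    rw [hW, natDegree_mul hm1.ne_zero hm2.ne_zero, natDegree_sub_C, natDegree_sub_C,
      natDegree_X_pow, natDegree_eq_of_degree_eq_some hud]
    ring
  classical
  let θ : F → F := fun ω =>
    if h : ∃ q : F, (fpoly (n+2) ω).eval q = 0 ∧ ((fpoly (n+2) ω).derivative).eval q = 0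
    then h.choose + (h.choose)⁻¹ else 0
  have witness : ∀ ω ∈ S, ∃ q : F, q ≠ 0 ∧
      (ω * (q^n * q^2 - 1) - (q - 1) * (q^n * q + 1) = 0) ∧
      (ω * (((n:F)+2) * (q^n * q)) - ((q^n * q + 1) + (q - 1) * (((n:F)+1) * q^n)) = 0) ∧
      θ ω = q + q⁻¹ := by
    intro ω hω
    have hex : ∃ q : F, (fpoly (n+2) ω).eval q = 0 ∧ ((fpoly (n+2) ω).derivative).eval q = 0 := hω
    refine ⟨hex.choose, ?_, ?_, ?_, ?_⟩
    · exact q_ne_zero n hn ω _ (by rw [← eval_dfpoly]; exact hex.choose_spec.2)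
    · rw [← eval_fpoly]; exact hex.choose_spec.1
    · rw [← eval_dfpoly]; exact hex.choose_spec.2
    · simp only [θ, dif_pos hex]
  have hmaps : ∀ ω ∈ S, W.eval (θ ω) = 0 := by
    intro ω hω
    obtain ⟨q, hq, h1, h2, hθ⟩ := witness ω hω
    rw [hθ, hW, eval_mul]
    by_cases hq2 : q^2 = 1
    · have hqi : q⁻¹ = q := by
        rw [inv_eq_of_mul_eq_one_right]; rw [← pow_two]; exact hq2
      have h4 : (q + q⁻¹)^2 = 4 := by
        rw [hqi]
        calc (q + q)^2 = 4 * q^2 := by ring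
        _ = 4 := by rw [hq2]; ring
      simp [eval_pow, h4]
    · have hqq : q * q⁻¹ = 1 := mul_inv_cancel₀ hq
      have hsub : q - q⁻¹ ≠ 0 := by
        intro h
        apply hq2
        have hqi : q = q⁻¹ := by linear_combination h
        calc q^2 = q * q := by ring
        _ = q * q⁻¹ := by rw [← hqi]
        _ = 1 := hqq
      have hg := grel n ω q h1 h2
      have hpow : q^(n+1) - (q⁻¹)^(n+1) = ((n:F)+1) * (q - q⁻¹) := by
        have key : (q^(n+1) - (q⁻¹)^(n+1) - ((n:F)+1) * (q - q⁻¹)) * (q^n * q)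
            = (q^n)^2 * q^2 - ((n:F)+1) * (q^n * q^2) + ((n:F)+1) * q^n - 1 := by
          rw [inv_pow]
          field_simp
          ring
        rw [hg] at key
        rcases mul_eq_zero.mp key with h | h
        · linear_combination h
        · exact absurd h (mul_ne_zero (pow_ne_zero n hq) hq)
      have hu := useq_eval (n+1) q hq
      rw [hpow] at hu
      have : ((useq F (n+1)).eval (q + q⁻¹) - ((n:F)+1)) * (q - q⁻¹) = 0 := by
        linear_combination hu
      rcases mul_eq_zero.mp this with h | h
      · have : (useq F (n+1) - C ((n:F)+1)).eval (q + q⁻¹) = 0 := by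
          rw [eval_sub, eval_C]; linear_combination h
        rw [this]; ring
      · exact absurd h hsub
  have hinj : Set.InjOn θ S := by
    intro ω hω ω' hω' hθeq
    obtain ⟨q, hq, h1, h2, hθ⟩ := witness ω hω
    obtain ⟨q', hq', h1', h2', hθ'⟩ := witness ω' hω'
    rw [hθ, hθ'] at hθeq
    have hfac : (q' - q) * (q' - q⁻¹) = 0 := by
      linear_combination (-q') * hθeq + mul_inv_cancel₀ hq - mul_inv_cancel₀ hq'
    rcases mul_eq_zero.mp hfac with h | h
    · have hqq' : q' = q := by linear_combination h
      rw [hqq'] at h1' h2'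
      exact uniq n hnF ω ω' q h1 h2 h1' h2'
    · have hqq' : q' = q⁻¹ := by linear_combination h
      have hqi : q'⁻¹ = q := by rw [hqq', inv_inv]
      have r1 := recip1 n ω' q' hq' h1'
      have r2 := recip2 n ω' q' hq' h1' h2'
      rw [hqi] at r1 r2
      exact uniq n hnF ω ω' q h1 h2 r1 r2
  -- conclude
  calc S.encard = (θ '' S).encard := (hinj.encard_image).symm
  _ ≤ ((W.roots.toFinset : Finset F) : Set F).encard := by
      apply Set.encard_mono
      rintro t ⟨ω, hω, rfl⟩
      simp only [Finset.coe_sort_coe, Multiset.mem_toFinset, Finset.mem_coe]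
      rw [mem_roots hWm.ne_zero]
      simpa [IsRoot] using hmaps ω hω
  _ = (W.roots.toFinset.card : ℕ∞) := Set.encard_coe_eq_coe_finsetCard _
  _ ≤ ((n + 2 : ℕ) : ℕ∞) := by
      have : W.roots.toFinset.card ≤ n + 2 := by
        calc W.roots.toFinset.card ≤ Multiset.card W.roots := W.roots.toFinset_card_le
        _ ≤ W.natDegree := W.card_roots'
        _ = n + 2 := hWdeg
      exact_mod_cast this
end

section
/- Let Γ = {q ∈ F : q^2 ≠ 1 and q^r = 1 for some integer r with 3 ≤ r ≤ d}. Then the set of ω ∈ F such that the equation f_ω(x) = 0 has no root in Γ is infinite. -/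
open Polynomial

/-- Let `Γ` be the set of roots of unity of order between `3` and `d` other than
`±1`.  Then there are infinitely many `ω ∈ F` such that `f_ω(x) = 0` has no root
in `Γ`. -/
theorem fpoly_no_root_in_Gamma_infinite
    {F : Type*} [Field F] [IsAlgClosed F] (d : ℕ) (hd : 3 ≤ d) :
    {ω : F | ∀ q ∈ {q : F | q ^ 2 ≠ 1 ∧ ∃ r : ℕ, 3 ≤ r ∧ r ≤ d ∧ q ^ r = 1},
      (fpoly d ω).eval q ≠ 0}.Infinite := by
  set Γ : Set F := {q : F | q ^ 2 ≠ 1 ∧ ∃ r : ℕ, 3 ≤ r ∧ r ≤ d ∧ q ^ r = 1} with hΓ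
  have hΓfin : Γ.Finite := by
    have hsub : Γ ⊆ ⋃ r ∈ Finset.Icc 3 d, {q : F | q ^ r = 1} := by
      rintro q ⟨-, r, h3, hd', hq⟩
      exact Set.mem_biUnion (Finset.mem_Icc.mpr ⟨h3, hd'⟩) hq
    refine Set.Finite.subset (Set.Finite.biUnion (Finset.finite_toSet _) ?_) hsub
    intro r hr
    have hrpos : 0 < r := by have := (Finset.mem_Icc.mp hr).1; omega
    have heq : {q : F | q ^ r = 1} = {q : F | (X ^ r - C 1 : F[X]).IsRoot q} := by
      ext q; simp [Polynomial.IsRoot, sub_eq_zero]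
    rw [heq]
    exact Polynomial.finite_setOf_isRoot (Polynomial.X_pow_sub_C_ne_zero hrpos 1)
  -- each fiber of bad ω's is subsingleton
  have hfiber : ∀ q ∈ Γ, {ω : F | (fpoly d ω).eval q = 0}.Finite := by
    rintro q ⟨hq2, r, h3, hrd, hqr⟩
    have heval : ∀ ω : F, (fpoly d ω).eval q
        = ω * (q ^ d - 1) - (q - 1) * (q ^ (d - 1) + 1) := by
      intro ω; simp [fpoly]
    by_cases hqd : q ^ d = 1
    · have hempty : {ω : F | (fpoly d ω).eval q = 0} = ∅ := by
        ext ω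
        simp only [Set.mem_setOf_eq, Set.mem_empty_iff_false, iff_false]
        rw [heval, hqd]
        have hq1 : q ≠ 1 := by rintro rfl; simp at hq2
        have hqm1 : q ^ (d - 1) + 1 ≠ 0 := by
          intro h
          have hpow : q ^ (d - 1) * q = 1 := by
            rw [← pow_succ]
            have : d - 1 + 1 = d := by omega
            rw [this, hqd]
          have hq' : q = -1 := by
            have h1 : q ^ (d - 1) = -1 := eq_neg_of_add_eq_zero_left h
            rw [h1] at hpow
            linear_combination -hpow
          rw [hq'] at hq2
          simp at hq2
        simp only [sub_self, mul_zero, zero_sub, neg_eq_zero, mul_eq_zero, not_or]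
        exact ⟨sub_ne_zero.mpr hq1, hqm1⟩
      rw [hempty]; exact Set.finite_empty
    · apply Set.Subsingleton.finite
      intro a ha b hb
      simp only [Set.mem_setOf_eq, heval] at ha hb
      have : (a - b) * (q ^ d - 1) = 0 := by linear_combination ha - hb
      rcases mul_eq_zero.mp this with h | h
      · exact sub_eq_zero.mp h
      · exact absurd (by linear_combination h : q ^ d = 1) hqd
  have hbadfin : (⋃ q ∈ Γ, {ω : F | (fpoly d ω).eval q = 0}).Finite :=
    Set.Finite.biUnion hΓfin hfiber
  have hcompl : {ω : F | ∀ q ∈ Γ, (fpoly d ω).eval q ≠ 0}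
      = (⋃ q ∈ Γ, {ω : F | (fpoly d ω).eval q = 0})ᶜ := by
    ext ω; simp
  rw [hcompl]
  exact Set.Finite.infinite_compl hbadfin
end

section
/- Let ω ∈ F with ω ≠ 1 and ω ≠ 2, and assume the equation f_ω(x) = 0 has no repeated roots (i.e., f_ω is squarefree). (a) If Char(F) ≠ 2 and d is odd, then the set {x ∈ F : f_ω(x) = 0, x ≠ 0, x ≠ 1, x ≠ -1} has exactly d-1 elements. (b) If d is even, then the set {x ∈ F : f_ω(x) = 0, x ≠ 0, x ≠ 1, x ≠ -1} has exactly d-2 elements. -/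
open Polynomial

lemma fpoly_natDegree {F : Type*} [Field F] {d : ℕ} (hd : 3 ≤ d) {ω : F} (hω1 : ω ≠ 1) :
    (fpoly d ω).natDegree = d := by
  unfold fpoly
  obtain ⟨e, he, rfl⟩ : ∃ e, 2 ≤ e ∧ d = e + 1 := ⟨d - 1, by omega, by omega⟩
  simp only [Nat.add_sub_cancel]
  compute_degree!
  · have h1 : e + 1 = 1 + e := by omega
    have h2 : e ≠ 0 := by omega
    simp [h1, h2, sub_ne_zero, hω1]
  all_goals omega

lemma fpoly_factor {F : Type*} [Field F] (d : ℕ) (ω : F) :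
    fpoly d ω = (X - 1) *
      (C ω * (∑ i ∈ Finset.range d, X ^ i) - (X ^ (d - 1) + 1)) := by
  unfold fpoly
  have := geom_sum_mul (X : Polynomial F) d
  rw [← this]
  ring

lemma fpoly_eval {F : Type*} [Field F] (d : ℕ) (ω : F) (x : F) :
    (fpoly d ω).eval x = ω * (x ^ d - 1) - (x - 1) * (x ^ (d - 1) + 1) := by
  simp [fpoly]

/-- If `ω ≠ 1`, `ω ≠ 2` and `f_ω` has no repeated roots (is squarefree), then the
equation `f_ω(x) = 0` has exactly `d-1` nonzero roots other than `±1` when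
`Char(F) ≠ 2` and `d` is odd, and exactly `d-2` such roots when `d` is even. -/
theorem fpoly_squarefree_root_count
    {F : Type*} [Field F] [IsAlgClosed F] (d : ℕ) (hd : 3 ≤ d) (ω : F)
    (hω1 : ω ≠ 1) (hω2 : ω ≠ 2) (hsf : Squarefree (fpoly d ω)) :
    (ringChar F ≠ 2 → Odd d →
      {x : F | (fpoly d ω).eval x = 0 ∧ x ≠ 0 ∧ x ≠ 1 ∧ x ≠ -1}.encard
        = ((d - 1 : ℕ) : ℕ∞)) ∧
    (Even d →
      {x : F | (fpoly d ω).eval x = 0 ∧ x ≠ 0 ∧ x ≠ 1 ∧ x ≠ -1}.encard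
        = ((d - 2 : ℕ) : ℕ∞)) := by
  classical
  set f := fpoly d ω with hf
  have hdeg : f.natDegree = d := fpoly_natDegree hd hω1
  have hf0 : f ≠ 0 := fun h => by simp [h] at hdeg; omega
  -- root multiset
  have hsep : f.Separable := PerfectField.separable_iff_squarefree.mpr hsf
  have hnodup : f.roots.Nodup := nodup_roots hsep
  have hcard : Multiset.card f.roots = d := by
    rw [← hdeg]
    exact splits_iff_card_roots.mp (IsAlgClosed.splits f)
  set T : Finset F := f.roots.toFinset with hT
  have hTcard : T.card = d := by
    rw [hT, Multiset.toFinset_card_of_nodup hnodup, hcard]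
  have hmem : ∀ x : F, x ∈ T ↔ f.eval x = 0 := by
    intro x
    rw [hT, Multiset.mem_toFinset, mem_roots hf0, IsRoot.def]
  -- evaluations
  have h1 : f.eval 1 = 0 := by rw [hf, fpoly_eval]; ring
  have h1T : (1 : F) ∈ T := (hmem 1).mpr h1
  have h0 : f.eval 0 ≠ 0 := by
    rw [hf, fpoly_eval]
    have hd0 : d ≠ 0 := by omega
    have hd1 : d - 1 ≠ 0 := by omega
    simp only [zero_pow hd0, zero_pow hd1]
    intro h
    exact hω1 (by linear_combination -h)
  constructor
  · intro hchar hodd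
    have h2 : (2 : F) ≠ 0 := Ring.two_ne_zero hchar
    have hm1 : f.eval (-1) ≠ 0 := by
      rw [hf, fpoly_eval]
      rw [hodd.neg_one_pow]
      have heven : Even (d - 1) := by
        obtain ⟨k, hk⟩ := hodd; exact ⟨k, by omega⟩
      rw [heven.neg_one_pow]
      intro h
      apply hω2
      have h4 : (2 : F) * ω = 2 * 2 := by linear_combination -h
      exact mul_left_cancel₀ h2 h4
    have hset : {x : F | f.eval x = 0 ∧ x ≠ 0 ∧ x ≠ 1 ∧ x ≠ -1} = ↑(T.erase 1) := by
      ext x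
      simp only [Set.mem_setOf_eq, Finset.coe_erase, Set.mem_diff, Finset.mem_coe,
        hmem, Set.mem_singleton_iff]
      constructor
      · rintro ⟨hx, _, hx1, _⟩; exact ⟨hx, hx1⟩
      · rintro ⟨hx, hx1⟩
        refine ⟨hx, ?_, hx1, ?_⟩
        · rintro rfl; exact h0 hx
        · rintro rfl; exact hm1 hx
    rw [hset, Set.encard_coe_eq_coe_finsetCard, Finset.card_erase_of_mem h1T, hTcard]
  · intro heven
    -- char ≠ 2
    have h2 : (2 : F) ≠ 0 := by
      intro h2
      have hdF : (d : F) = 0 := by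
        obtain ⟨k, hk⟩ := heven
        have : (d : F) = 2 * (k : F) := by rw [hk]; push_cast; ring
        rw [this, h2, zero_mul]
      set g : Polynomial F := C ω * (∑ i ∈ Finset.range d, X ^ i) - (X ^ (d - 1) + 1) with hg
      have hfact : f = (X - 1) * g := fpoly_factor d ω
      have hg1 : g.eval 1 = 0 := by
        rw [hg]
        simp only [eval_sub, eval_mul, eval_C, eval_add, eval_pow, eval_one, eval_finset_sum,
          eval_X, one_pow]
        simp [hdF, ← sub_sub]
        linear_combination -h2
      have hdvd : (X - 1 : Polynomial F) ∣ g := by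
        have := dvd_iff_isRoot (p := g) (a := (1 : F))
        simpa using this.mpr hg1
      obtain ⟨h, hh⟩ := hdvd
      have : IsUnit (X - 1 : Polynomial F) := by
        apply hsf (X - 1)
        exact ⟨h, by rw [hfact, hh]; ring⟩
      exact Polynomial.not_isUnit_X_sub_C (1 : F) (by simpa using this)
    have hne : (-1 : F) ≠ 1 := by
      intro h
      apply h2
      linear_combination -h
    have hm1 : f.eval (-1) = 0 := by
      rw [hf, fpoly_eval, heven.neg_one_pow]
      have hodd : Odd (d - 1) := by
        obtain ⟨k, hk⟩ := heven
        exact ⟨k - 1, by omega⟩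
      rw [hodd.neg_one_pow]
      ring
    have hm1T : (-1 : F) ∈ T.erase 1 := Finset.mem_erase.mpr ⟨hne, (hmem _).mpr hm1⟩
    have hset : {x : F | f.eval x = 0 ∧ x ≠ 0 ∧ x ≠ 1 ∧ x ≠ -1} = ↑((T.erase 1).erase (-1)) := by
      ext x
      simp only [Set.mem_setOf_eq, Finset.coe_erase, Set.mem_diff, Finset.mem_coe,
        Finset.mem_erase, hmem, Set.mem_singleton_iff]
      constructor
      · rintro ⟨hx, _, hx1, hxm1⟩; exact ⟨⟨hx, hx1⟩, hxm1⟩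
      · rintro ⟨⟨hx, hx1⟩, hxm1⟩
        exact ⟨hx, fun h => h0 (h ▸ hx), hx1, hxm1⟩
    rw [hset, Set.encard_coe_eq_coe_finsetCard, Finset.card_erase_of_mem hm1T,
      Finset.card_erase_of_mem h1T, hTcard]
    norm_cast
end

section
/- Fix scalars θ_0, θ_d, θ*_0, θ*_d, φ_1, φ_d, ϕ_1, ϕ_d in F with θ_0 ≠ θ_d and θ*_0 ≠ θ*_d, and a nonzero q ∈ F such that q^i ≠ 1 for 1 ≤ i ≤ d and (ϕ_1 + ϕ_d - φ_1 - φ_d)/((θ_0 - θ_d)(θ*_0 - θ*_d)) = (q - 1)(q^{d-1} + 1)/(q^d - 1). For 0 ≤ i ≤ d define θ̃_i = θ_0 - (q^i - 1)(q^{2d-i-1} - 1)(θ_0 - θ_d)/((q^{d-1} - 1)(q^d - 1)) + (q^i - 1)(q^{d-i} - 1)(ϕ_1 - φ_d)/((q - 1)(q^{d-1} - 1)(θ*_0 - θ*_d)) and θ̃*_i = θ*_0 - (q^i - 1)(q^{2d-i-1} - 1)(θ*_0 - θ*_d)/((q^{d-1} - 1)(q^d - 1)) + (q^i - 1)(q^{d-i}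 - 1)(ϕ_d - φ_d)/((q - 1)(q^{d-1} - 1)(θ_0 - θ_d)). For 1 ≤ i ≤ d define ϑ_i = (q^i - 1)(q^{d-i+1} - 1)/((q - 1)(q^d - 1)), φ̃_i = ϕ_1 ϑ_i + (θ̃*_i - θ̃*_0)(θ̃_{i-1} - θ̃_d), and ϕ̃_i = φ_1 ϑ_i + (θ̃*_i - θ̃*_0)(θ̃_{d-i+1} - θ̃_0). Then the sequence p̃ = ({θ̃_i}_{i=0}^d, {θ̃*_i}_{i=0}^d, {φ̃_i}_{i=1}^d, {ϕ̃_i}_{i=1}^d) is a parameter array over F of diameter d if and only if θ̃_i ≠ θ̃_j and θ̃*_i ≠ θ̃*_j for 0 ≤ i < j ≤ d, and φ̃_i ≠ 0 and ϕ̃_i ≠ 0 for 1 ≤ i ≤ d. In this case, θ̃_0 = θ_0, θ̃_d = θ_d, θ̃*_0 = θ*_0, θ̃*_d = θ*_d, φ̃_1 = φ_1, φ̃_d = φ_d, ϕ̃_1 = ϕ_1, and ϕ̃_d = ϕ_d. -/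
open Finset

set_option maxHeartbeats 1600000 in
set_option maxRecDepth 16000 in
/-- Construction of a parameter array of type I with prescribed end-parameters:
the candidate sequence `p̃ = (θt, θst, φt, ϕt)` is a parameter array over `F` of
diameter `d` iff the `θt`, `θst` are mutually distinct and the `φt`, `ϕt` are
nonzero; in this case `p̃` has the prescribed end-parameters. -/
theorem construction_typeI
    {F : Type*} [Field F] [IsAlgClosed F] (d : ℕ) (hd : 3 ≤ d)
    (θ0 θd θs0 θsd φ1 φd ϕ1 ϕd q : F)
    (hθ : θ0 ≠ θd) (hθs : θs0 ≠ θsd) (hq : q ≠ 0)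
    (hqi : ∀ i, 1 ≤ i → i ≤ d → q ^ i ≠ 1)
    (hΩ : (ϕ1 + ϕd - φ1 - φd) / ((θ0 - θd) * (θs0 - θsd))
        = (q - 1) * (q ^ (d - 1) + 1) / (q ^ d - 1))
    (θt θst φt ϕt : ℕ → F)
    (hθt : ∀ i, i ≤ d → θt i = θ0
        - (q ^ i - 1) * (q ^ (2 * d - i - 1) - 1) * (θ0 - θd)
            / ((q ^ (d - 1) - 1) * (q ^ d - 1))
        + (q ^ i - 1) * (q ^ (d - i) - 1) * (ϕ1 - φd)
            / ((q - 1) * (q ^ (d - 1) - 1) * (θs0 - θsd)))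
    (hθst : ∀ i, i ≤ d → θst i = θs0
        - (q ^ i - 1) * (q ^ (2 * d - i - 1) - 1) * (θs0 - θsd)
            / ((q ^ (d - 1) - 1) * (q ^ d - 1))
        + (q ^ i - 1) * (q ^ (d - i) - 1) * (ϕd - φd)
            / ((q - 1) * (q ^ (d - 1) - 1) * (θ0 - θd)))
    (hφt : ∀ i, 1 ≤ i → i ≤ d → φt i =
        ϕ1 * ((q ^ i - 1) * (q ^ (d - i + 1) - 1) / ((q - 1) * (q ^ d - 1)))
        + (θst i - θst 0) * (θt (i - 1) - θt d))
    (hϕt : ∀ i, 1 ≤ i → i ≤ d → ϕt i =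
        φ1 * ((q ^ i - 1) * (q ^ (d - i + 1) - 1) / ((q - 1) * (q ^ d - 1)))
        + (θst i - θst 0) * (θt (d - i + 1) - θt 0)) :
    ((∃ β : F, IsParameterArray d θt θst φt ϕt β) ↔
      ((∀ i j, i < j → j ≤ d → θt i ≠ θt j ∧ θst i ≠ θst j) ∧
       (∀ i, 1 ≤ i → i ≤ d → φt i ≠ 0 ∧ ϕt i ≠ 0))) ∧
    (((∀ i j, i < j → j ≤ d → θt i ≠ θt j ∧ θst i ≠ θst j) ∧
      (∀ i, 1 ≤ i → i ≤ d → φt i ≠ 0 ∧ ϕt i ≠ 0)) →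
      θt 0 = θ0 ∧ θt d = θd ∧ θst 0 = θs0 ∧ θst d = θsd ∧
      φt 1 = φ1 ∧ φt d = φd ∧ ϕt 1 = ϕ1 ∧ ϕt d = ϕd) := by
  have hq1 : q - 1 ≠ 0 := sub_ne_zero.2 (by simpa using hqi 1 le_rfl (by omega))
  have hqd : q ^ d - 1 ≠ 0 := sub_ne_zero.2 (hqi d (by omega) le_rfl)
  have hqd1 : q ^ (d-1) - 1 ≠ 0 := sub_ne_zero.2 (hqi (d-1) (by omega) (by omega))
  have hθ' : θ0 - θd ≠ 0 := sub_ne_zero.2 hθ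
  have hθs' : θs0 - θsd ≠ 0 := sub_ne_zero.2 hθs
  have hqq : q ^ (d-1) * q = q ^ d := by rw [← pow_succ]; congr 1; omega
  have hΩ' : (ϕ1 + ϕd - φ1 - φd) * (q ^ d - 1)
      = (q - 1) * (q ^ (d-1) + 1) * ((θ0 - θd) * (θs0 - θsd)) := by
    field_simp at hΩ; linear_combination hΩ
  -- closed forms with additive exponents
  have hθt' : ∀ m n : ℕ, m + n = d →
      θt m = θ0 - (q ^ m - 1) * (q ^ (d - 1) * q ^ n - 1) * (θ0 - θd)
          / ((q ^ (d - 1) - 1) * (q ^ d - 1))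
        + (q ^ m - 1) * (q ^ n - 1) * (ϕ1 - φd)
          / ((q - 1) * (q ^ (d - 1) - 1) * (θs0 - θsd)) := by
    intro m n hmn
    rw [hθt m (by omega), show 2 * d - m - 1 = (d - 1) + n by omega, pow_add,
      show d - m = n by omega]
  have hθst' : ∀ m n : ℕ, m + n = d →
      θst m = θs0 - (q ^ m - 1) * (q ^ (d - 1) * q ^ n - 1) * (θs0 - θsd)
          / ((q ^ (d - 1) - 1) * (q ^ d - 1))
        + (q ^ m - 1) * (q ^ n - 1) * (ϕd - φd)
          / ((q - 1) * (q ^ (d - 1) - 1) * (θ0 - θd)) := by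
    intro m n hmn
    rw [hθst m (by omega), show 2 * d - m - 1 = (d - 1) + n by omega, pow_add,
      show d - m = n by omega]
  have hθt0 : θt 0 = θ0 := by rw [hθt 0 (by omega)]; simp
  have hθst0 : θst 0 = θs0 := by rw [hθst 0 (by omega)]; simp
  have hθtd : θt d = θd := by
    rw [hθt' d 0 (by omega), pow_zero]
    norm_num
    field_simp
    ring
  have hθstd : θst d = θsd := by
    rw [hθst' d 0 (by omega), pow_zero]
    norm_num
    field_simp
    ring
  -- key identities
  have hθst1 : θst 1 = θs0 - (q-1)*(q^(d-1)+1)*(θs0-θsd)/(q^d-1)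
      + (ϕd-φd)/(θ0-θd) := by
    rw [hθst' 1 (d-1) (by omega), pow_one]
    congr 1
    · congr 1
      rw [show (q-1)*(q^(d-1)*q^(d-1)-1)*(θs0-θsd)
          = (q^(d-1)-1)*((q-1)*(q^(d-1)+1)*(θs0-θsd)) by ring,
        mul_div_mul_left _ _ hqd1]
    · rw [mul_div_mul_left _ _ (mul_ne_zero hq1 hqd1)]
  have hθt1 : θt 1 = θ0 - (q-1)*(q^(d-1)+1)*(θ0-θd)/(q^d-1)
      + (ϕ1-φd)/(θs0-θsd) := by
    rw [hθt' 1 (d-1) (by omega), pow_one]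
    congr 1
    · congr 1
      rw [show (q-1)*(q^(d-1)*q^(d-1)-1)*(θ0-θd)
          = (q^(d-1)-1)*((q-1)*(q^(d-1)+1)*(θ0-θd)) by ring,
        mul_div_mul_left _ _ hqd1]
    · rw [mul_div_mul_left _ _ (mul_ne_zero hq1 hqd1)]
  have key1 : (θst 1 - θst 0) * (θ0 - θd) = φ1 - ϕ1 := by
    rw [hθst1, hθst0]
    field_simp
    linear_combination hΩ'
  have key3 : (θt 1 - θ0) * (θs0 - θsd) = φ1 - ϕd := by
    rw [hθt1]
    field_simp
    linear_combination hΩ'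
  have hθtd1 : θt (d-1) = θd + (ϕ1 - φd) / (θs0 - θsd) := by
    rw [hθt' (d-1) 1 (by omega), pow_one, hqq]
    field_simp
    ring
  have hφ1 : φt 1 = φ1 := by
    rw [hφt 1 le_rfl (by omega), show d - 1 + 1 = d by omega, pow_one, hθt0, hθtd]
    rw [div_self (mul_ne_zero hq1 hqd), mul_one]
    linear_combination key1
  have hϕ1 : ϕt 1 = ϕ1 := by
    rw [hϕt 1 le_rfl (by omega), show d - 1 + 1 = d by omega, pow_one, hθt0, hθtd]
    rw [div_self (mul_ne_zero hq1 hqd), mul_one]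
    linear_combination -key1
  have hφd : φt d = φd := by
    rw [hφt d (by omega) le_rfl, show d - d + 1 = 1 by omega, pow_one, hθstd, hθst0,
      hθtd, hθtd1]
    rw [mul_comm (q^d - 1) (q - 1), div_self (mul_ne_zero hq1 hqd), mul_one]
    field_simp
    ring
  have hϕd : ϕt d = ϕd := by
    rw [hϕt d (by omega) le_rfl, show d - d + 1 = 1 by omega, pow_one, hθstd, hθst0,
      hθt0]
    rw [mul_comm (q^d - 1) (q - 1), div_self (mul_ne_zero hq1 hqd), mul_one]
    linear_combination -key3
  -- term and sum identities
  have hterm : ∀ l, l ≤ d →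
      (θt l - θt (d - l)) / (θt 0 - θt d) = (q ^ (d - l) - q ^ l) / (q ^ d - 1) := by
    intro l hl
    rw [hθt0, hθtd, hθt' l (d - l) (by omega), hθt' (d - l) l (by omega)]
    rw [div_eq_div_iff hθ' hqd]
    field_simp
    ring
  have hgeo : ∀ i, i ≤ d →
      (q - 1) * ∑ l ∈ Finset.range i, (q ^ (d - l) - q ^ l)
        = (q ^ i - 1) * (q ^ (d - i + 1) - 1) := by
    intro i
    induction i with
    | zero => simp
    | succ n ih =>
      intro h
      have h1 := ih (by omega)
      rw [Finset.sum_range_succ, show d - (n+1) + 1 = d - n by omega, pow_succ]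
      rw [show d - n + 1 = (d - n) + 1 from rfl, pow_succ] at h1
      have h2 : q ^ (d - n) = q ^ (d - (n+1)) * q := by
        rw [← pow_succ]; congr 1; omega
      rw [h2] at h1 ⊢
      linear_combination h1
  have hsum : ∀ i, 1 ≤ i → i ≤ d →
      ∑ l ∈ Finset.range i, (θt l - θt (d - l)) / (θt 0 - θt d)
        = (q ^ i - 1) * (q ^ (d - i + 1) - 1) / ((q - 1) * (q ^ d - 1)) := by
    intro i h1 h2
    rw [Finset.sum_congr rfl fun l hl =>
      hterm l (by have := Finset.mem_range.1 hl; omega), ← Finset.sum_div,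
      div_eq_div_iff hqd (mul_ne_zero hq1 hqd)]
    linear_combination (q ^ d - 1) * hgeo i h2
  refine ⟨⟨fun ⟨β, h⟩ => ⟨fun i j hij hjd => ⟨h.1 i j hij hjd, h.2.1 i j hij hjd⟩,
      fun i h1 h2 => ⟨h.2.2.1 i h1 h2, h.2.2.2.1 i h1 h2⟩⟩, ?_⟩,
    fun _ => ⟨hθt0, hθtd, hθst0, hθstd, hφ1, hφd, hϕ1, hϕd⟩⟩
  rintro ⟨hdist, hnz⟩
  refine ⟨q + q⁻¹, fun i j hij hjd => (hdist i j hij hjd).1,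
    fun i j hij hjd => (hdist i j hij hjd).2,
    fun i h1 h2 => (hnz i h1 h2).1, fun i h1 h2 => (hnz i h1 h2).2,
    fun i h1 h2 => by rw [hφt i h1 h2, hϕ1, hsum i h1 h2],
    fun i h1 h2 => by rw [hϕt i h1 h2, hφ1, hsum i h1 h2],
    fun i h2i hi => ?_⟩
  obtain ⟨j, k, rfl, hd'⟩ : ∃ j k, i = j + 2 ∧ d = j + k + 3 :=
    ⟨i - 2, d - i - 1, by omega, by omega⟩
  rw [show j + 2 - 2 = j by omega, show j + 2 - 1 = j + 1 by omega]
  have hne1 : θt (j+1) - θt (j+2) ≠ 0 :=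
    sub_ne_zero.2 ((hdist (j+1) (j+2) (by omega) (by omega)).1)
  have hne2 : θst (j+1) - θst (j+2) ≠ 0 :=
    sub_ne_zero.2 ((hdist (j+1) (j+2) (by omega) (by omega)).2)
  have hnum1 : (θt j - θt (j + 3)) * q = (q^2 + q + 1) * (θt (j+1) - θt (j+2)) := by
    rw [hθt' j (k+3) (by omega),
      hθt' (j+3) k (by omega), hθt' (j+1) (k+2) (by omega), hθt' (j+2) (k+1) (by omega)]
    ring
  have hnum2 : (θst j - θst (j + 3)) * q = (q^2 + q + 1) * (θst (j+1) - θst (j+2)) := by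
    rw [hθst' j (k+3) (by omega),
      hθst' (j+3) k (by omega), hθst' (j+1) (k+2) (by omega), hθst' (j+2) (k+1) (by omega)]
    ring
  constructor
  · rw [show j + 2 + 1 = j + 3 from rfl, div_eq_iff hne1]
    field_simp
    linear_combination hnum1
  · rw [show j + 2 + 1 = j + 3 from rfl, div_eq_iff hne2]
    field_simp
    linear_combination hnum2
end
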